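/- arXiv:1704.06930 — 8 statements merged into one kernel-verified Lean document; each statement's English description precedes it below -/
import Mathlib

section
/- For all integers s1,…,sl ≥ 1 one has the identity of formal power series in ℚ⟦q⟧: [s1,…,sl] = (1/((s1−1)!⋯(sl−1)!)) · ∑_{n1>⋯>nl>0} ∏_{j=1}^l q^{nj}·P_{sj−1}(q^{nj})/(1−q^{nj})^{sj}, where each factor (1−q^{nj})^{−sj} is expanded as a formal power series (the summand attached to (n1,…,nl) has order ≥ n1, so the infinite sum is a well-defined element of ℚ⟦q⟧). -/
open Finset

open Classical in
/-- The bi-bracket `[s₁,…,s_l; r₁,…,r_l] ∈ ℚ⟦q⟧`, defined coefficient-wise. -/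
noncomputable def biBracket {l : ℕ} (s r : Fin l → ℕ) : PowerSeries ℚ :=
  PowerSeries.mk fun n =>
    ∑ u : Fin l → Fin (n + 1), ∑ v : Fin l → Fin (n + 1),
      if (∀ i j : Fin l, i < j → (u j : ℕ) < (u i : ℕ)) ∧ (∀ j, 0 < (u j : ℕ)) ∧
          (∀ j, 0 < (v j : ℕ)) ∧ (∑ j, (u j : ℕ) * (v j : ℕ)) = n
      then ∏ j, (u j : ℚ) ^ (r j) / (Nat.factorial (r j)) *
            ((v j : ℚ) ^ (s j - 1) / (Nat.factorial (s j - 1)))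
      else 0

/-- The bracket `[s₁,…,s_l] ∈ ℚ⟦q⟧`. -/
noncomputable def bracket {l : ℕ} (s : Fin l → ℕ) : PowerSeries ℚ :=
  biBracket s 0

/-- Eulerian numbers `A_{s,n}`. -/
def eulerianNumber (s n : ℕ) : ℚ :=
  ∑ i ∈ Finset.range (n + 1), (-1 : ℚ) ^ i * ((s + 1).choose i) * ((n + 1 - i : ℕ) : ℚ) ^ s

/-- The `s`-th Eulerian polynomial `P_s`, with `P_0 = 1`. -/
noncomputable def eulerianPoly : ℕ → Polynomial ℚ
  | 0 => 1
  | (s + 1) => ∑ n ∈ Finset.range (s + 1), Polynomial.C (eulerianNumber (s + 1) n) * Polynomial.X ^ n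

/-!
The coefficients of `(1 - X)^{t+1} ∑_{v>0} v^t X^v` are the Eulerian numbers `A_{t,n}`, and for
`n ≥ t` the sum defining `A_{t,n}`, read backwards, is the `(t+1)`-st forward difference of
`x ↦ x^t`, hence zero. This is Euler's identity `∑_{v>0} v^t X^v = X P_t(X) / (1 - X)^{t+1}`.
Substituting `X ↦ q^{n_j}` turns the `j`-th factor of the right-hand side into
`∑_{v>0} v^{s_j-1} q^{n_j v}`, and multiplying these series out reproduces the defining sum of
the bracket.
-/

theorem eulerianNumber_eq_zero {t n : ℕ} (htn : t ≤ n) (hn : 0 < n) :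
    eulerianNumber t n = 0 := by
  set g : ℕ → ℚ := fun i => (-1) ^ i * (t + 1).choose i * ((n : ℚ) + 1 - i) ^ t with hg
  have hvanish : ∀ i, n < i ∨ t + 1 < i → g i = 0 := by
    rintro i (hi | hi)
    · rcases Nat.lt_or_ge (t + 1) i with hti | hti
      · simp [hg, Nat.choose_eq_zero_of_lt hti]
      · have hi : i = n + 1 := by omega
        simp [hg, hi, zero_pow (by omega : t ≠ 0)]
    · simp [hg, Nat.choose_eq_zero_of_lt hi]
  have hdiff : ∑ i ∈ range (t + 2), g i = 0 := by
    have h := fwdDiff_iter_eq_sum_shift (1 : ℚ) (fun r : ℚ => r ^ t) (t + 1) ((n : ℚ) - t)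
    rw [fwdDiff_iter_pow_eq_zero_of_lt (Nat.lt_succ_self t), Pi.zero_apply] at h
    rw [h, ← sum_range_reflect]
    refine sum_congr rfl fun k hk => ?_
    have hk : k ≤ t + 1 := Nat.lt_succ_iff.mp (mem_range.mp hk)
    rw [show t + 2 - 1 - k = t + 1 - k by omega, hg]
    dsimp only
    rw [Nat.choose_symm hk, zsmul_eq_mul, nsmul_eq_mul, mul_one]
    push_cast [hk]
    ring
  calc eulerianNumber t n = ∑ i ∈ range (n + 1), g i := by
        refine sum_congr rfl fun i hi => ?_
        rw [Nat.cast_sub (by simp at hi; omega)]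
        push_cast
        ring
    _ = ∑ i ∈ range (n + t + 2), g i :=
        sum_subset (range_subset_range.2 (by omega)) fun i _ hi =>
          hvanish i (Or.inl (by simp at hi; omega))
    _ = ∑ i ∈ range (t + 2), g i :=
        (sum_subset (range_subset_range.2 (by omega)) fun i _ hi =>
          hvanish i (Or.inr (by simp at hi; omega))).symm
    _ = 0 := hdiff

theorem eulerianPoly_coeff (t n : ℕ) : (eulerianPoly t).coeff n = eulerianNumber t n := by
  cases t with
  | zero =>
    rcases Nat.eq_zero_or_pos n with rfl | hn
    · simp [eulerianPoly, eulerianNumber]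
    · rw [eulerianNumber_eq_zero (Nat.zero_le n) hn, eulerianPoly, Polynomial.coeff_one,
        if_neg hn.ne']
  | succ t =>
    simp only [eulerianPoly, Polynomial.finsetSum_coeff, Polynomial.coeff_C_mul_X_pow,
      sum_ite_eq, mem_range]
    split_ifs with hn
    · rfl
    · exact (eulerianNumber_eq_zero (by omega) (by omega)).symm

namespace PowerSeries

variable {R : Type*} [CommRing R]

theorem coeff_one_sub_X_pow (N d : ℕ) :
    coeff d ((1 - X : R⟦X⟧) ^ N) = (-1) ^ d * N.choose d := by
  have h : (1 - X : R⟦X⟧) ^ N = rescale (-1) ((1 + Polynomial.X) ^ N : Polynomial R) := by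
    simp [sub_eq_add_neg]
  rw [h, coeff_rescale, Polynomial.coeff_coe, Polynomial.coeff_one_add_X_pow]

theorem coe_eq_aeval_X (p : Polynomial R) :
    (p : R⟦X⟧) = Polynomial.aeval X p := by
  simpa using
    (Polynomial.aeval_algHom_apply (Polynomial.coeToPowerSeries.algHom R) Polynomial.X p).symm

theorem coeff_prod_congr {ι : Type*} {s : Finset ι} {f g : ι → R⟦X⟧} {m : ℕ}
    (h : ∀ i ∈ s, ∀ k ≤ m, coeff k (f i) = coeff k (g i)) :
    coeff m (∏ i ∈ s, f i) = coeff m (∏ i ∈ s, g i) := by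
  classical
  simp only [coeff_prod]
  refine sum_congr rfl fun l hl => prod_congr rfl fun i hi => h i hi _ ?_
  rw [mem_finsuppAntidiag] at hl
  calc l i ≤ ∑ j ∈ s, l j := single_le_sum (f := fun j => l j) (fun _ _ => Nat.zero_le _) hi
    _ = m := hl.1

theorem coeff_expand_eq_sum_fin {u : ℕ} (hu : u ≠ 0) (f : R⟦X⟧) {m k : ℕ} (hk : k ≤ m) :
    coeff k (expand u hu f) = coeff k (∑ v : Fin (m + 1), C (coeff v f) * X ^ (u * v)) := by
  simp only [coeff_expand, map_sum, coeff_C_mul_X_pow]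
  split_ifs with hdvd
  · obtain ⟨w, rfl⟩ := hdvd
    have hw : w < m + 1 := by nlinarith [Nat.pos_of_ne_zero hu]
    rw [sum_eq_single ⟨w, hw⟩, if_pos rfl, Nat.mul_div_cancel_left _ (Nat.pos_of_ne_zero hu)]
    · intro v _ hv
      exact if_neg fun h =>
        hv (Fin.ext (Nat.eq_of_mul_eq_mul_left (Nat.pos_of_ne_zero hu) h).symm)
    · simp
  · exact (sum_eq_zero fun (v : Fin (m + 1)) _ => if_neg fun h => hdvd ⟨v, h⟩).symm

theorem coeff_prod_expand {ι : Type*} [Fintype ι] [DecidableEq ι] (u : ι → ℕ)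
    (hu : ∀ i, u i ≠ 0) (f : ι → R⟦X⟧) (m : ℕ) :
    coeff m (∏ i, expand (u i) (hu i) (f i)) =
      ∑ v : ι → Fin (m + 1), if ∑ i, u i * v i = m then ∏ i, coeff (v i) (f i) else 0 := by
  rw [coeff_prod_congr fun i _ k hk => coeff_expand_eq_sum_fin (hu i) (f i) hk, Fintype.prod_sum,
    map_sum]
  refine sum_congr rfl fun v _ => ?_
  rw [prod_mul_distrib, ← map_prod, prod_pow_eq_pow_sum, coeff_C_mul_X_pow]
  simp only [eq_comm]

end PowerSeries

open PowerSeries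

/-- The polylogarithm `Li_{-t}(X)`. -/
noncomputable def polylogNeg (t : ℕ) : ℚ⟦X⟧ :=
  mk fun v => if 0 < v then (v : ℚ) ^ t else 0

theorem one_sub_X_pow_mul_polylogNeg (t : ℕ) :
    (1 - X) ^ (t + 1) * polylogNeg t = X * (eulerianPoly t : ℚ⟦X⟧) := by
  ext d
  cases d with
  | zero => simp [polylogNeg]
  | succ n =>
    rw [coeff_succ_X_mul, Polynomial.coeff_coe, eulerianPoly_coeff, coeff_mul,
      Nat.sum_antidiagonal_eq_sum_range_succ_mk, sum_range_succ]
    simp only [polylogNeg, coeff_mk, coeff_one_sub_X_pow, lt_irrefl, if_false, Nat.sub_self,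
      mul_zero, add_zero]
    refine sum_congr rfl fun i hi => ?_
    rw [if_pos (by simp at hi; omega)]

theorem X_pow_mul_aeval_eulerianPoly_mul_inv_pow {u : ℕ} (hu : u ≠ 0) (t : ℕ) :
    X ^ u * Polynomial.aeval (X ^ u : ℚ⟦X⟧) (eulerianPoly t) * ((1 - X ^ u)⁻¹) ^ (t + 1) =
      expand u hu (polylogNeg t) := by
  have hexpand : (1 - X ^ u) ^ (t + 1) * expand u hu (polylogNeg t) =
      X ^ u * Polynomial.aeval (X ^ u : ℚ⟦X⟧) (eulerianPoly t) := by
    simpa [coe_eq_aeval_X, ← Polynomial.aeval_algHom_apply] using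
      congrArg (expand u hu) (one_sub_X_pow_mul_polylogNeg t)
  have hinv : (1 - X ^ u : ℚ⟦X⟧) * (1 - X ^ u)⁻¹ = 1 :=
    PowerSeries.mul_inv_cancel _ (by simp [hu])
  rw [← hexpand, mul_right_comm, ← mul_pow, hinv, one_pow, one_mul]

theorem coeff_prod_expand_polylogNeg {ι : Type*} [Fintype ι] [DecidableEq ι] (u : ι → ℕ)
    (hu : ∀ i, u i ≠ 0) (t : ι → ℕ) (m : ℕ) :
    coeff m (∏ i, expand (u i) (hu i) (polylogNeg (t i))) =
      ∑ v : ι → Fin (m + 1), if (∀ i, 0 < (v i : ℕ)) ∧ ∑ i, u i * v i = m then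
        ∏ i, ((v i : ℕ) : ℚ) ^ t i else 0 := by
  rw [coeff_prod_expand]
  refine sum_congr rfl fun v _ => ?_
  simp only [polylogNeg, coeff_mk, prod_ite_zero, mem_univ, true_imp_iff, and_comm (a := ∀ _, _),
    ite_and]

theorem factorial_prod_mul_coeff_bracket {l : ℕ} (s : Fin l → ℕ) (m : ℕ) :
    (∏ j, ((s j - 1).factorial : ℚ)) * coeff m (bracket s) =
      ∑ u : Fin l → Fin (m + 1),
        if (∀ i j : Fin l, i < j → (u j : ℕ) < (u i : ℕ)) ∧ (∀ j, 0 < (u j : ℕ)) then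
          ∑ v : Fin l → Fin (m + 1),
            if (∀ j, 0 < (v j : ℕ)) ∧ ∑ j, (u j : ℕ) * v j = m then
              ∏ j, ((v j : ℕ) : ℚ) ^ (s j - 1) else 0
        else 0 := by
  rw [bracket, biBracket, coeff_mk, mul_sum]
  refine sum_congr rfl fun u _ => ?_
  rw [mul_sum]
  split_ifs with hu
  · refine sum_congr rfl fun v _ => ?_
    by_cases hv : (∀ j, 0 < (v j : ℕ)) ∧ ∑ j, (u j : ℕ) * v j = m
    · rw [if_pos ⟨hu.1, hu.2, hv⟩, if_pos hv, ← prod_mul_distrib]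
      refine prod_congr rfl fun j _ => ?_
      have := (s j - 1).factorial_ne_zero
      simp only [Pi.zero_apply, pow_zero, Nat.factorial_zero, Nat.cast_one, div_one, one_mul]
      field_simp
    · rw [if_neg fun h => hv h.2.2, if_neg hv, mul_zero]
  · exact sum_eq_zero fun v _ => by rw [if_neg fun h => hu ⟨h.1, h.2.1⟩, mul_zero]

open Classical in
/-- For `s₁,…,s_l ≥ 1` one has
`[s₁,…,s_l] = (1/((s₁−1)!⋯(s_l−1)!)) · ∑_{n₁>⋯>n_l>0} ∏_j q^{n_j} P_{s_j−1}(q^{n_j})/(1−q^{n_j})^{s_j}`,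
stated coefficient-wise: the coefficient of `q^m` of the infinite sum equals the coefficient of
`q^m` of the (finite) sum over all tuples with `n_j ≤ m`, since the summand attached to
`(n₁,…,n_l)` has order `≥ n₁`. -/
theorem bracket_eq_eulerian_sum {l : ℕ} (s : Fin l → ℕ) (hs : ∀ j, 1 ≤ s j) (m : ℕ) :
    (∏ j, ((s j - 1).factorial : ℚ)) * PowerSeries.coeff (R := ℚ) m (bracket s) =
      PowerSeries.coeff (R := ℚ) m (∑ n : Fin l → Fin (m + 1),
        if (∀ i j : Fin l, i < j → (n j : ℕ) < (n i : ℕ)) ∧ (∀ j, 0 < (n j : ℕ)) then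
          ∏ j, (PowerSeries.X ^ (n j : ℕ) *
            Polynomial.aeval ((PowerSeries.X : PowerSeries ℚ) ^ (n j : ℕ)) (eulerianPoly (s j - 1)) *
            ((1 - PowerSeries.X ^ (n j : ℕ))⁻¹) ^ (s j))
        else 0) := by
  rw [factorial_prod_mul_coeff_bracket, map_sum]
  refine sum_congr rfl fun n _ => ?_
  split_ifs with hn
  · have hn0 : ∀ j, (n j : ℕ) ≠ 0 := fun j => (hn.2 j).ne'
    have hfactor : ∀ j, X ^ (n j : ℕ) *
        Polynomial.aeval ((X : ℚ⟦X⟧) ^ (n j : ℕ)) (eulerianPoly (s j - 1)) *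
        ((1 - X ^ (n j : ℕ))⁻¹) ^ (s j) = expand (n j : ℕ) (hn0 j) (polylogNeg (s j - 1)) := by
      intro j
      rw [← X_pow_mul_aeval_eulerianPoly_mul_inv_pow (hn0 j), Nat.sub_add_cancel (hs j)]
    rw [prod_congr rfl fun j _ => hfactor j]
    convert (coeff_prod_expand_polylogNeg _ hn0 (fun j => s j - 1) m).symm
  · rw [map_zero]
end

section
/- For all integers a, b ≥ 1 one has the identity of formal power series in ℚ⟦z⟧: L̃i_{1−a}(z) · L̃i_{1−b}(z) = ∑_{j=1}^{a} λ^j_{a,b}·L̃i_{1−j}(z) + ∑_{j=1}^{b} λ^j_{b,a}·L̃i_{1−j}(z) + L̃i_{1−(a+b)}(z), where λ^j_{a,b} = (−1)^{b−1}·binom(a+b−j−1, a−j)·B_{a+b−j}/(a+b−j)!. -/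
open Finset

/-- `L̃i_{1−s}(z) = (1/(s−1)!)·∑_{n>0} n^{s−1} z^n ∈ ℚ⟦z⟧` for `s ≥ 1`. -/
noncomputable def Ltilde (s : ℕ) : PowerSeries ℚ :=
  PowerSeries.mk fun n => if n = 0 then 0 else (n : ℚ) ^ (s - 1) / (s - 1).factorial

/-- The coefficient `λ^j_{a,b} = (−1)^{b−1}·binom(a+b−j−1, a−j)·B_{a+b−j}/(a+b−j)!`,
where `B_k` is the `k`-th Bernoulli number with `B_1 = −1/2` (Mathlib's `bernoulli`). -/
noncomputable def lambdaCoeff (j a b : ℕ) : ℚ :=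
  (-1 : ℚ) ^ (b - 1) * ((a + b - j - 1).choose (a - j)) * bernoulli (a + b - j) /
    (a + b - j).factorial

/-!
Let `θ = z d/dz`. Then `θ L̃i_{1−s} = s·L̃i_{−s}`, so by the Leibniz rule `P(a, b) = L̃i_{1−a}·L̃i_{1−b}`
satisfies `θ P(a, b) = a·P(a+1, b) + b·P(a, b+1)`. The right-hand side obeys the same recurrence,
because `a·λ^j_{a+1,b} + b·λ^j_{a,b+1} = (j−1)·λ^{j−1}_{a,b}` (a binomial identity); since this
recurrence determines `P(a+1, ·)` from `P(a, ·)`, induction on `a` reduces the theorem to `a = 1`.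
There `(1 − z)·L̃i_0 = z`, and the coefficients of the right-hand side are, up to a constant,
`B_b(n)/b!` for the Bernoulli polynomial `B_b`, so the claim becomes `B_b(n+1) − B_b(n) = b·n^{b−1}`.
-/
open PowerSeries

noncomputable def eulerOp : Derivation ℚ ℚ⟦X⟧ ℚ⟦X⟧ := (X : ℚ⟦X⟧) • derivative ℚ

theorem coeff_eulerOp (f : ℚ⟦X⟧) (n : ℕ) : coeff n (eulerOp f) = n * coeff n f := by
  rcases n with _ | n
  · simp [eulerOp]
  · simp only [eulerOp, Derivation.coe_smul, Pi.smul_apply, smul_eq_mul, coeff_succ_X_mul,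
      coeff_derivative, Nat.cast_add, Nat.cast_one]
    ring

theorem coeff_Ltilde (s n : ℕ) :
    coeff n (Ltilde s) = if n = 0 then 0 else (n : ℚ) ^ (s - 1) / (s - 1).factorial :=
  coeff_mk _ _

@[simp]
theorem constantCoeff_Ltilde (s : ℕ) : constantCoeff (Ltilde s) = 0 := by
  simp [Ltilde]

theorem eulerOp_Ltilde {s : ℕ} (hs : 1 ≤ s) : eulerOp (Ltilde s) = (s : ℚ) • Ltilde (s + 1) := by
  obtain ⟨s, rfl⟩ := Nat.exists_eq_add_of_le' hs
  ext n
  rcases eq_or_ne n 0 with rfl | hn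
  · simp [coeff_eulerOp, coeff_Ltilde]
  · simp only [coeff_eulerOp, coeff_smul, coeff_Ltilde, if_neg hn, Nat.add_sub_cancel,
      Nat.factorial_succ, smul_eq_mul]
    push_cast
    field_simp
    ring

theorem lambdaCoeff_succ_succ (j a b : ℕ) : lambdaCoeff (j + 1) (a + 1) b = lambdaCoeff j a b := by
  simp only [lambdaCoeff, Nat.add_sub_add_right, show a + 1 + b = a + b + 1 by omega]

theorem mul_lambdaCoeff_succ_succ_right {j a b : ℕ} (hj : j < a) (hb : 1 ≤ b) :
    (b : ℚ) * lambdaCoeff (j + 1) a (b + 1) = ((j : ℚ) - a) * lambdaCoeff j a b := by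
  obtain ⟨k, rfl⟩ := Nat.exists_eq_add_of_lt hj
  obtain ⟨c, rfl⟩ := Nat.exists_eq_add_of_le' hb
  have hchoose := Nat.choose_succ_right_eq (k + c + 1) k
  rw [show k + c + 1 - k = c + 1 by omega] at hchoose
  simp only [lambdaCoeff, show j + k + 1 + (c + 1 + 1) - (j + 1) = k + c + 2 by omega,
    show j + k + 1 + (c + 1) - j = k + c + 2 by omega, show j + k + 1 - (j + 1) = k by omega,
    show j + k + 1 - j = k + 1 by omega, Nat.add_sub_cancel, pow_succ]
  have hq : ((k + c + 1).choose (k + 1) : ℚ) * (k + 1) = ((k + c + 1).choose k : ℚ) * (c + 1) := by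
    exact_mod_cast hchoose
  push_cast
  linear_combination (-1 : ℚ) ^ c * bernoulli (k + c + 2) / (k + c + 2).factorial * hq

noncomputable def lambdaSum (a b : ℕ) : ℚ⟦X⟧ := ∑ j ∈ Icc 1 a, lambdaCoeff j a b • Ltilde j

theorem lambdaSum_eq_sum_range (a b : ℕ) :
    lambdaSum a b = ∑ j ∈ range a, lambdaCoeff (j + 1) a b • Ltilde (j + 1) := by
  rw [lambdaSum, ← Ico_add_one_right_eq_Icc, sum_Ico_eq_sum_range, Nat.add_sub_cancel]
  simp only [add_comm 1]

theorem eulerOp_lambdaSum {a b : ℕ} (hb : 1 ≤ b) :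
    eulerOp (lambdaSum a b) = (a : ℚ) • lambdaSum (a + 1) b + (b : ℚ) • lambdaSum a (b + 1) := by
  have h_euler : eulerOp (lambdaSum a b) =
      ∑ j ∈ range (a + 1), ((j : ℚ) * lambdaCoeff j a b) • Ltilde (j + 1) := by
    rw [lambdaSum_eq_sum_range, map_sum, sum_range_succ']
    simp [eulerOp_Ltilde, smul_smul, mul_comm]
  have h_left : (a : ℚ) • lambdaSum (a + 1) b =
      ∑ j ∈ range (a + 1), ((a : ℚ) * lambdaCoeff j a b) • Ltilde (j + 1) := by
    simp only [lambdaSum_eq_sum_range, smul_sum, smul_smul, lambdaCoeff_succ_succ]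
  have h_right : (b : ℚ) • lambdaSum a (b + 1) =
      ∑ j ∈ range (a + 1), (((j : ℚ) - a) * lambdaCoeff j a b) • Ltilde (j + 1) := by
    rw [lambdaSum_eq_sum_range, smul_sum, sum_range_succ, sub_self, zero_mul, zero_smul, add_zero]
    refine sum_congr rfl fun j hj => ?_
    rw [smul_smul, mul_lambdaCoeff_succ_succ_right (mem_range.1 hj) hb]
  rw [h_euler, h_left, h_right, ← sum_add_distrib]
  refine sum_congr rfl fun j _ => ?_
  rw [← add_smul]
  congr 1
  ring

theorem eulerOp_Ltilde_mul_Ltilde {a b : ℕ} (ha : 1 ≤ a) (hb : 1 ≤ b) :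
    eulerOp (Ltilde a * Ltilde b) =
      (a : ℚ) • (Ltilde (a + 1) * Ltilde b) + (b : ℚ) • (Ltilde a * Ltilde (b + 1)) := by
  rw [Derivation.leibniz, eulerOp_Ltilde ha, eulerOp_Ltilde hb, smul_eq_mul, smul_eq_mul,
    mul_smul_comm, mul_smul_comm, add_comm, mul_comm (Ltilde b)]

noncomputable def mulExpansion (a b : ℕ) : ℚ⟦X⟧ := lambdaSum a b + lambdaSum b a + Ltilde (a + b)

@[simp]
theorem constantCoeff_mulExpansion (a b : ℕ) : constantCoeff (mulExpansion a b) = 0 := by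
  simp [mulExpansion, lambdaSum]

theorem eulerOp_mulExpansion {a b : ℕ} (ha : 1 ≤ a) (hb : 1 ≤ b) :
    eulerOp (mulExpansion a b) =
      (a : ℚ) • mulExpansion (a + 1) b + (b : ℚ) • mulExpansion a (b + 1) := by
  simp only [mulExpansion, map_add, eulerOp_lambdaSum ha, eulerOp_lambdaSum hb,
    eulerOp_Ltilde (le_add_right ha), smul_add, Nat.cast_add, add_smul,
    show a + 1 + b = a + b + 1 by omega, show a + (b + 1) = a + b + 1 by omega]
  abel

theorem one_sub_X_mul_Ltilde_one : (1 - X) * Ltilde 1 = X := by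
  ext n
  rcases n with _ | _ | n <;> simp [sub_mul, coeff_succ_X_mul, coeff_Ltilde, coeff_X]

theorem coeff_lambdaSum_add_Ltilde_succ (b : ℕ) {n : ℕ} (hn : n ≠ 0) :
    coeff n (lambdaSum b 1 + Ltilde (b + 1)) =
      (Polynomial.bernoulli b).eval (n : ℚ) / b.factorial := by
  rw [lambdaSum_eq_sum_range, Polynomial.bernoulli_def, Polynomial.eval_finsetSum, sum_div,
    sum_range_succ, map_add, map_sum]
  congr 1
  · refine sum_congr rfl fun j hj => ?_
    have hjb := (mem_range.1 hj).le
    rw [coeff_smul, coeff_Ltilde, if_neg hn, Nat.add_sub_cancel, lambdaCoeff, Nat.add_sub_add_right,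
      ← Nat.sub_add_eq, Nat.choose_self, Polynomial.eval_monomial, Nat.cast_choose ℚ hjb]
    simp only [smul_eq_mul, Nat.sub_self, pow_zero, Nat.cast_one, one_mul]
    field_simp
  · simp [coeff_Ltilde, hn]

theorem coeff_mulExpansion_one {b n : ℕ} (hn : n ≠ 0) :
    coeff n (mulExpansion 1 b) =
      ((Polynomial.bernoulli b).eval (n : ℚ) + (-1) ^ (b - 1) * bernoulli b) / b.factorial := by
  rw [mulExpansion, add_comm 1 b, add_assoc, map_add, coeff_lambdaSum_add_Ltilde_succ b hn,
    add_div, add_comm]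
  simp [lambdaSum, lambdaCoeff, coeff_Ltilde, hn]

theorem X_mul_Ltilde_eq_one_sub_X_mul_mulExpansion {b : ℕ} (hb : 1 ≤ b) :
    X * Ltilde b = (1 - X) * mulExpansion 1 b := by
  ext n
  rcases n with _ | n
  · simp
  rw [coeff_succ_X_mul, sub_mul, one_mul, map_sub, coeff_succ_X_mul,
    coeff_mulExpansion_one n.succ_ne_zero, coeff_Ltilde]
  rcases eq_or_ne n 0 with rfl | hn
  · have hsign : (-1 : ℚ) ^ b + (-1) ^ (b - 1) = 0 := by
      obtain ⟨c, rfl⟩ := Nat.exists_eq_add_of_le' hb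
      simp [pow_succ]
    rw [if_pos rfl, coeff_zero_eq_constantCoeff_apply, constantCoeff_mulExpansion, sub_zero,
      Nat.cast_one, Polynomial.bernoulli_eval_one, bernoulli'_eq_bernoulli, ← add_mul, hsign,
      zero_mul, zero_div]
  · rw [coeff_mulExpansion_one hn, if_neg hn, Nat.cast_succ, add_comm (n : ℚ),
      Polynomial.bernoulli_eval_one_add]
    obtain ⟨c, rfl⟩ := Nat.exists_eq_add_of_le' hb
    rw [Nat.factorial_succ]
    push_cast
    field_simp
    ring

theorem Ltilde_one_mul {b : ℕ} (hb : 1 ≤ b) : Ltilde 1 * Ltilde b = mulExpansion 1 b := by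
  have h_ne : (1 - X : ℚ⟦X⟧) ≠ 0 := fun h => by simpa using congrArg constantCoeff h
  refine mul_left_cancel₀ h_ne ?_
  rw [← mul_assoc, one_sub_X_mul_Ltilde_one, X_mul_Ltilde_eq_one_sub_X_mul_mulExpansion hb]

/-- For all `a, b ≥ 1`:
`L̃i_{1−a}(z)·L̃i_{1−b}(z) = ∑_{j=1}^{a} λ^j_{a,b}·L̃i_{1−j}(z) + ∑_{j=1}^{b} λ^j_{b,a}·L̃i_{1−j}(z)
  + L̃i_{1−(a+b)}(z)`. -/
theorem Ltilde_mul (a b : ℕ) (ha : 1 ≤ a) (hb : 1 ≤ b) :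
    Ltilde a * Ltilde b =
      (∑ j ∈ Finset.Icc 1 a, lambdaCoeff j a b • Ltilde j) +
      (∑ j ∈ Finset.Icc 1 b, lambdaCoeff j b a • Ltilde j) + Ltilde (a + b) := by
  show Ltilde a * Ltilde b = mulExpansion a b
  induction a, ha using Nat.le_induction generalizing b with
  | base => exact Ltilde_one_mul hb
  | succ a ha ih =>
    refine smul_right_injective ℚ⟦X⟧ (show (a : ℚ) ≠ 0 by positivity) ?_
    calc (a : ℚ) • (Ltilde (a + 1) * Ltilde b)
        = eulerOp (Ltilde a * Ltilde b) - (b : ℚ) • (Ltilde a * Ltilde (b + 1)) := by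
          rw [eulerOp_Ltilde_mul_Ltilde ha hb, add_sub_cancel_right]
      _ = eulerOp (mulExpansion a b) - (b : ℚ) • mulExpansion a (b + 1) := by
          rw [ih b hb, ih (b + 1) (Nat.le_succ_of_le hb)]
      _ = (a : ℚ) • mulExpansion (a + 1) b := by
          rw [eulerOp_mulExpansion ha hb, add_sub_cancel_right]
end

section
/- The space of brackets is closed under multiplication respecting both filtrations: for any integers s1,…,sl1 ≥ 1 and t1,…,tl2 ≥ 1, the product [s1,…,sl1]·[t1,…,tl2] in ℚ⟦q⟧ lies in the ℚ-linear span of 1 and all brackets [a1,…,ar] with r ≤ l1+l2 and a1+⋯+ar ≤ (s1+⋯+sl1)+(t1+⋯+tl2). In particular the ℚ-vector space spanned by 1 and all brackets is a ℚ-subalgebra of ℚ⟦q⟧. -/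
/-!
A bracket is a nested sum `∑_{u₁ > ⋯ > u_l > 0} ∏ᵢ f_{sᵢ}(q^{uᵢ})` of the slot series
`f_s = ∑_{v ≥ 1} v^{s-1}/(s-1)! qᵛ`. Truncated at `u₁ ≤ N`, two such nested sums multiply by the
quasi-shuffle (stuffle) rule, the slots of merged letters being multiplied, because
`f ↦ f(q^u)` is a ring homomorphism; induct on `N`.

The slot series `f_1, …, f_k` span the same space as the powers `Y, …, Y^k` of `Y = q/(1-q)`:
both are images of the polynomials of degree `< k` under `p ↦ ∑_{v ≥ 1} p(v) qᵛ`. Since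
`Y^a Y^b = Y^{a+b}`, one rewrites both brackets in the `Y`-basis slot by slot, multiplies by the
stuffle rule (length at most `l₁ + l₂`, weight exactly additive) and rewrites back; neither change
of basis raises the weight.
-/

open Finset

open PowerSeries

noncomputable section

namespace List

variable {α β : Type*}

def stuffle (m : α → α → α) : List α → List α → List (List α)
  | [], ys => [ys]
  | x :: xs, [] => [x :: xs]
  | x :: xs, y :: ys =>
      (stuffle m xs (y :: ys)).map (x :: ·) ++ (stuffle m (x :: xs) ys).map (y :: ·) ++
        (stuffle m xs ys).map (m x y :: ·)

theorem stuffle_map (φ : α → β) {m : α → α → α} {m' : β → β → β}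
    (hφ : ∀ a b, φ (m a b) = m' (φ a) (φ b)) (xs ys : List α) :
    stuffle m' (xs.map φ) (ys.map φ) = (stuffle m xs ys).map (map φ) := by
  induction xs, ys using stuffle.induct with
  | case1 ys => simp [stuffle]
  | case2 x xs => simp [stuffle]
  | case3 x xs y ys ih₁ ih₂ ih₃ =>
    simp only [map_cons] at ih₁ ih₂ ⊢
    simp [stuffle, ih₁, ih₂, ih₃, Function.comp_def, hφ]

theorem length_le_of_mem_stuffle {m : α → α → α} {xs ys w : List α}
    (hw : w ∈ stuffle m xs ys) : w.length ≤ xs.length + ys.length := by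
  induction xs, ys using stuffle.induct generalizing w with
  | case1 ys => simp_all [stuffle]
  | case2 x xs => simp_all [stuffle]
  | case3 x xs y ys ih₁ ih₂ ih₃ =>
    simp only [stuffle, mem_append, mem_map] at hw
    rcases hw with (⟨w, hw, rfl⟩ | ⟨w, hw, rfl⟩) | ⟨w, hw, rfl⟩
    · have := ih₁ hw
      simp only [length_cons] at this ⊢
      omega
    · have := ih₂ hw
      simp only [length_cons] at this ⊢
      omega
    · have := ih₃ hw
      simp only [length_cons] at this ⊢
      omega

theorem sum_of_mem_stuffle [AddCommMonoid α] {xs ys w : List α}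
    (hw : w ∈ stuffle (· + ·) xs ys) : w.sum = xs.sum + ys.sum := by
  induction xs, ys using stuffle.induct generalizing w with
  | case1 ys => simp_all [stuffle]
  | case2 x xs => simp_all [stuffle]
  | case3 x xs y ys ih₁ ih₂ ih₃ =>
    simp only [stuffle, mem_append, mem_map] at hw
    rcases hw with (⟨w, hw, rfl⟩ | ⟨w, hw, rfl⟩) | ⟨w, hw, rfl⟩
    · simp [ih₁ hw, add_assoc]
    · simp [ih₂ hw]; abel
    · simp [ih₃ hw]; abel

theorem forall_mem_of_mem_stuffle {m : α → α → α} {p : α → Prop}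
    (hm : ∀ a b, p a → p b → p (m a b)) {xs ys w : List α} (hxs : ∀ x ∈ xs, p x)
    (hys : ∀ y ∈ ys, p y) (hw : w ∈ stuffle m xs ys) : ∀ z ∈ w, p z := by
  induction xs, ys using stuffle.induct generalizing w with
  | case1 ys => simp_all [stuffle]
  | case2 x xs => simp_all [stuffle]
  | case3 x xs y ys ih₁ ih₂ ih₃ =>
    simp only [stuffle, mem_append, mem_map] at hw
    simp only [mem_cons, forall_eq_or_imp] at hxs hys
    rcases hw with (⟨w, hw, rfl⟩ | ⟨w, hw, rfl⟩) | ⟨w, hw, rfl⟩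
    · simpa [hxs.1] using ih₁ hxs.2 (by simpa using hys) hw
    · simpa [hys.1] using ih₂ (by simpa using hxs) hys.2 hw
    · simpa [hm _ _ hxs.1 hys.1] using ih₃ hxs.2 hys.2 hw

end List

theorem Fin.strictAnti_cons {α : Type*} [Preorder α] {n : ℕ} {f : Fin n → α} {a : α} :
    StrictAnti (Fin.cons a f : Fin (n + 1) → α) ↔ (∀ j, f j < a) ∧ StrictAnti f :=
  Fin.liftFun_cons (· > ·)

theorem strictAnti_cons_and_bounded_iff {l a N : ℕ} {t : Fin l → ℕ} :
    (StrictAnti (Fin.cons a t : Fin (l + 1) → ℕ) ∧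
        ∀ j, 0 < (Fin.cons a t : Fin (l + 1) → ℕ) j ∧ (Fin.cons a t : Fin (l + 1) → ℕ) j ≤ N) ↔
      (0 < a ∧ a ≤ N) ∧ StrictAnti t ∧ ∀ j, 0 < t j ∧ t j ≤ a - 1 := by
  simp only [Fin.strictAnti_cons, Fin.forall_fin_succ, Fin.cons_zero, Fin.cons_succ]
  constructor
  · rintro ⟨⟨hlt, hanti⟩, ha, hpos⟩
    exact ⟨ha, hanti, fun j => ⟨(hpos j).1, by have := hlt j; omega⟩⟩
  · rintro ⟨ha, hanti, hpos⟩
    exact ⟨⟨fun j => by have := (hpos j).2; omega, hanti⟩, ha,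
      fun j => ⟨(hpos j).1, by have := (hpos j).2; omega⟩⟩

theorem sum_piFinset_const_succ {α M : Type*} [DecidableEq α] [AddCommMonoid M] {l : ℕ}
    (S : Finset α) (F : (Fin (l + 1) → α) → M) :
    ∑ w ∈ Fintype.piFinset (fun _ => S), F w =
      ∑ a ∈ S, ∑ t ∈ Fintype.piFinset (fun _ : Fin l => S), F (Fin.cons a t) := by
  have := Finset.filter_piFinset_eq_map_consEquiv (fun _ : Fin (l + 1) => S) (fun _ => True)
  simp only [Finset.filter_true] at this
  rw [this, sum_map, sum_product]
  rfl

theorem sum_fin_tuple_eq_sum_piFinset {M : Type*} [AddCommMonoid M] (l n : ℕ)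
    (F : (Fin l → ℕ) → M) :
    ∑ u : Fin l → Fin (n + 1), F (fun j => u j) =
      ∑ u ∈ Fintype.piFinset (fun _ => range (n + 1)), F u := by
  refine sum_nbij' (fun (u : Fin l → Fin (n + 1)) j => (u j : ℕ))
    (fun (u : Fin l → ℕ) j => Fin.ofNat (n + 1) (u j))
    (fun u _ => by simpa [Nat.lt_succ_iff] using fun j => (u j).is_le) (by simp)
    (fun u _ => by ext j; simp) (fun u hu => ?_) (fun _ _ => rfl)
  ext j
  simp_all

theorem sum_fin_tuple_pair_eq_sum_piFinset {M : Type*} [AddCommMonoid M] (l n : ℕ)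
    (F : (Fin l → ℕ) → (Fin l → ℕ) → M) :
    ∑ u : Fin l → Fin (n + 1), ∑ v : Fin l → Fin (n + 1), F (fun j => u j) (fun j => v j) =
      ∑ u ∈ Fintype.piFinset (fun _ => range (n + 1)),
        ∑ v ∈ Fintype.piFinset (fun _ => range (n + 1)), F u v := by
  rw [← sum_fin_tuple_eq_sum_piFinset]
  exact sum_congr rfl fun u _ => sum_fin_tuple_eq_sum_piFinset l n (F fun j => u j)

section NestedSum

variable {R : Type*} [CommRing R]

/-- `nestedSum [f₁, …, f_l] N = ∑_{N ≥ u₁ > ⋯ > u_l ≥ 1} f₁(q^{u₁}) ⋯ f_l(q^{u_l})`. -/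
def nestedSum : List R⟦X⟧ → ℕ → R⟦X⟧
  | [], _ => 1
  | f :: fs, N => ∑ u ∈ range N, expand (u + 1) u.succ_ne_zero f * nestedSum fs u

/-- The limit of `nestedSum fs N` as `N → ∞`. It is the intended series only when every slot has
zero constant term, which makes the coefficients stabilise (`coeff_nestedSum_of_le`). -/
def nestedSeries (fs : List R⟦X⟧) : R⟦X⟧ :=
  mk fun n => coeff n (nestedSum fs n)

@[simp] theorem nestedSum_nil (N : ℕ) : nestedSum ([] : List R⟦X⟧) N = 1 := rfl

@[simp] theorem nestedSum_cons_zero (f : R⟦X⟧) (fs : List R⟦X⟧) : nestedSum (f :: fs) 0 = 0 := by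
  simp [nestedSum]

theorem nestedSum_cons_succ (f : R⟦X⟧) (fs : List R⟦X⟧) (N : ℕ) :
    nestedSum (f :: fs) (N + 1) =
      nestedSum (f :: fs) N + expand (N + 1) N.succ_ne_zero f * nestedSum fs N := by
  simp only [nestedSum, sum_range_succ]

theorem X_pow_dvd_nestedSum_succ_sub {fs : List R⟦X⟧} (hfs : ∀ f ∈ fs, constantCoeff f = 0)
    (N : ℕ) : X ^ (N + 1) ∣ nestedSum fs (N + 1) - nestedSum fs N := by
  cases fs with
  | nil => simp
  | cons f fs =>
    obtain ⟨g, rfl⟩ := X_dvd_iff.mpr (hfs f List.mem_cons_self)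
    rw [nestedSum_cons_succ, add_sub_cancel_left, map_mul, expand_X, mul_assoc]
    exact dvd_mul_right _ _

theorem coeff_nestedSum_of_le {fs : List R⟦X⟧} (hfs : ∀ f ∈ fs, constantCoeff f = 0)
    {n N : ℕ} (hn : n ≤ N) : coeff n (nestedSum fs N) = coeff n (nestedSum fs n) := by
  induction N, hn using Nat.le_induction with
  | base => rfl
  | succ N hN ih =>
    rw [← ih, ← sub_eq_zero, ← map_sub]
    exact X_pow_dvd_iff.mp (X_pow_dvd_nestedSum_succ_sub hfs N) n (by omega)

theorem coeff_nestedSeries {fs : List R⟦X⟧} (hfs : ∀ f ∈ fs, constantCoeff f = 0)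
    {n N : ℕ} (hn : n ≤ N) : coeff n (nestedSeries fs) = coeff n (nestedSum fs N) := by
  rw [nestedSeries, coeff_mk, coeff_nestedSum_of_le hfs hn]

theorem sum_map_nestedSum_cons_succ (L : List (List R⟦X⟧)) (f : R⟦X⟧) (N : ℕ) :
    ((L.map (f :: ·)).map (nestedSum · (N + 1))).sum =
      ((L.map (f :: ·)).map (nestedSum · N)).sum +
        expand (N + 1) N.succ_ne_zero f * (L.map (nestedSum · N)).sum := by
  simp [nestedSum_cons_succ, List.sum_map_add, List.sum_map_mul_left, Function.comp_def]

theorem nestedSum_mul (N : ℕ) (fs gs : List R⟦X⟧) :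
    nestedSum fs N * nestedSum gs N =
      ((List.stuffle (· * ·) fs gs).map (nestedSum · N)).sum := by
  induction N generalizing fs gs with
  | zero =>
    match fs, gs with
    | [], gs => simp [List.stuffle]
    | f :: fs, [] => simp [List.stuffle]
    | f :: fs, g :: gs => simp [List.stuffle, Function.comp_def]
  | succ N ih =>
    match fs, gs with
    | [], gs => simp [List.stuffle]
    | f :: fs, [] => simp [List.stuffle]
    | f :: fs, g :: gs =>
      have h := ih (f :: fs) (g :: gs)
      simp only [List.stuffle, List.map_append, List.sum_append] at h ⊢
      simp only [sum_map_nestedSum_cons_succ, nestedSum_cons_succ]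
      rw [← ih, ← ih, ← ih, map_mul]
      linear_combination h

theorem nestedSeries_mul {fs gs : List R⟦X⟧} (hfs : ∀ f ∈ fs, constantCoeff f = 0)
    (hgs : ∀ g ∈ gs, constantCoeff g = 0) :
    nestedSeries fs * nestedSeries gs =
      ((List.stuffle (· * ·) fs gs).map nestedSeries).sum := by
  ext n
  have hsum : ∀ p ∈ antidiagonal n, coeff p.1 (nestedSeries fs) * coeff p.2 (nestedSeries gs) =
      coeff p.1 (nestedSum fs n) * coeff p.2 (nestedSum gs n) := fun p hp => by
    rw [HasAntidiagonal.mem_antidiagonal] at hp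
    rw [coeff_nestedSeries hfs (N := n) (by omega), coeff_nestedSeries hgs (N := n) (by omega)]
  rw [coeff_mul, sum_congr rfl hsum, ← coeff_mul, nestedSum_mul, map_list_sum, map_list_sum,
    List.map_map, List.map_map]
  simp [nestedSeries, Function.comp_def]

theorem nestedSum_append_cons_add (pre post : List R⟦X⟧) (f g : R⟦X⟧) (N : ℕ) :
    nestedSum (pre ++ (f + g) :: post) N =
      nestedSum (pre ++ f :: post) N + nestedSum (pre ++ g :: post) N := by
  induction pre generalizing N with
  | nil => simp only [List.nil_append, nestedSum, map_add, add_mul, sum_add_distrib]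
  | cons p pre ih => simp only [List.cons_append, nestedSum, ih, mul_add, sum_add_distrib]

theorem nestedSum_append_cons_smul (pre post : List R⟦X⟧) (c : R) (f : R⟦X⟧) (N : ℕ) :
    nestedSum (pre ++ (c • f) :: post) N = c • nestedSum (pre ++ f :: post) N := by
  induction pre generalizing N with
  | nil => simp only [List.nil_append, nestedSum, map_smul, smul_mul_assoc, smul_sum]
  | cons p pre ih => simp only [List.cons_append, nestedSum, ih, mul_smul_comm, smul_sum]

def nestedSeriesSlot (pre post : List R⟦X⟧) : R⟦X⟧ →ₗ[R] R⟦X⟧ where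
  toFun f := nestedSeries (pre ++ f :: post)
  map_add' f g := by ext n; simp [nestedSeries, nestedSum_append_cons_add]
  map_smul' c f := by ext n; simp [nestedSeries, nestedSum_append_cons_smul]

open Classical in
theorem nestedSum_ofFn {l : ℕ} (f : Fin l → R⟦X⟧) {N M : ℕ} (hNM : N ≤ M) :
    nestedSum (List.ofFn f) N = ∑ u ∈ Fintype.piFinset (fun _ => range (M + 1)),
      if StrictAnti u ∧ ∀ j, 0 < u j ∧ u j ≤ N then ∏ j, subst (X ^ u j) (f j) else 0 := by
  induction l generalizing N with
  | zero => simp [Subsingleton.strictAnti]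
  | succ l ih =>
    have hterm : ∀ a ∈ range (M + 1),
        (∑ t ∈ Fintype.piFinset (fun _ : Fin l => range (M + 1)),
          if StrictAnti (Fin.cons a t : Fin (l + 1) → ℕ) ∧
              ∀ j, 0 < (Fin.cons a t : Fin (l + 1) → ℕ) j ∧ (Fin.cons a t : Fin (l + 1) → ℕ) j ≤ N
          then ∏ j, subst (X ^ (Fin.cons a t : Fin (l + 1) → ℕ) j) (f j) else 0) =
        if 0 < a ∧ a ≤ N then
          subst (X ^ a) (f 0) * nestedSum (List.ofFn fun j => f j.succ) (a - 1) else 0 := by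
      intro a ha
      split_ifs with h
      · rw [ih _ (by simp at ha; omega), mul_sum]
        refine sum_congr rfl fun t _ => ?_
        simp only [strictAnti_cons_and_bounded_iff, h, true_and, Fin.prod_univ_succ,
          Fin.cons_zero, Fin.cons_succ, mul_ite, mul_zero]
      · exact sum_eq_zero fun t _ => if_neg fun hc => h (strictAnti_cons_and_bounded_iff.mp hc).1
    rw [List.ofFn_succ, nestedSum, sum_piFinset_const_succ, sum_congr rfl hterm,
      sum_range_succ', ← sum_filter]
    simp only [lt_irrefl, false_and, if_false, add_zero]
    rw [show (range M).filter (fun u => 0 < u + 1 ∧ u + 1 ≤ N) = range N by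
      ext u; simp only [mem_filter, mem_range]; omega]
    exact sum_congr rfl fun u _ => by rw [expand_apply, Nat.add_sub_cancel]

theorem coeff_subst_X_pow_mul {a : ℕ} (ha : a ≠ 0) (g h : R⟦X⟧) {n M : ℕ} (hn : n ≤ M) :
    coeff n (subst (X ^ a) g * h) =
      ∑ v ∈ range (M + 1), if a * v ≤ n then coeff v g * coeff (n - a * v) h else 0 := by
  rw [coeff_mul]
  symm
  refine sum_bij_ne_zero (fun v _ _ => (a * v, n - a * v)) (fun v _ hv => ?_)
    (fun v _ _ w _ _ hvw => ?_) (fun p hp hp0 => ?_) (fun v _ hv => ?_)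
  · rw [HasAntidiagonal.mem_antidiagonal]
    have : a * v ≤ n := by by_contra hc; exact hv (if_neg hc)
    omega
  · exact Nat.eq_of_mul_eq_mul_left (Nat.pos_of_ne_zero ha) (congrArg Prod.fst hvw)
  · rw [HasAntidiagonal.mem_antidiagonal] at hp
    rw [coeff_subst_X_pow ha, Algebra.algebraMap_self, RingHom.id_apply] at hp0
    have hdvd : a ∣ p.1 := by by_contra hc; exact hp0 (by rw [if_neg hc, zero_mul])
    obtain ⟨v, hv⟩ := hdvd
    have hvle : v ≤ p.1 := by rw [hv]; exact Nat.le_mul_of_pos_left v (Nat.pos_of_ne_zero ha)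
    have hp2 : p.2 = n - a * v := by omega
    rw [hv, hp2, if_pos (dvd_mul_right a v), Nat.mul_div_cancel_left _ (Nat.pos_of_ne_zero ha)]
      at hp0
    refine ⟨v, mem_range.mpr (by omega), by rwa [if_pos (by omega)], ?_⟩
    ext <;> simp <;> omega
  · have : a * v ≤ n := by by_contra hc; exact hv (if_neg hc)
    rw [if_pos this, coeff_subst_X_pow ha, if_pos (dvd_mul_right a v),
      Nat.mul_div_cancel_left v (Nat.pos_of_ne_zero ha)]
    rfl

theorem coeff_prod_subst_X_pow {l : ℕ} {u : Fin l → ℕ} (hu : ∀ j, 0 < u j) (f : Fin l → R⟦X⟧)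
    {n M : ℕ} (hn : n ≤ M) :
    coeff n (∏ j, subst (X ^ u j) (f j)) =
      ∑ v ∈ Fintype.piFinset (fun _ => range (M + 1)),
        if ∑ j, u j * v j = n then ∏ j, coeff (v j) (f j) else 0 := by
  induction l generalizing n with
  | zero => simp [coeff_one, eq_comm]
  | succ l ih =>
    rw [Fin.prod_univ_succ, coeff_subst_X_pow_mul (hu 0).ne' _ _ hn, sum_piFinset_const_succ]
    refine sum_congr rfl fun v₀ _ => ?_
    simp only [Fin.sum_univ_succ, Fin.prod_univ_succ, Fin.cons_zero, Fin.cons_succ]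
    split_ifs with h
    · rw [ih (u := fun j => u j.succ) (fun j => hu j.succ) (fun j => f j.succ) (n := n - u 0 * v₀)
        (by omega), mul_sum]
      refine sum_congr rfl fun t _ => ?_
      rw [mul_ite, mul_zero]
      exact if_congr (by omega) rfl rfl
    · exact (sum_eq_zero fun t _ => if_neg (by omega)).symm

def nestedSpan (ψ : ℕ → R⟦X⟧) (L W : ℕ) : Submodule R R⟦X⟧ :=
  Submodule.span R {F | ∃ cs : List ℕ, (∀ c ∈ cs, 1 ≤ c) ∧ cs.length ≤ L ∧ cs.sum ≤ W ∧
    F = nestedSeries (cs.map ψ)}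

theorem nestedSpan_mono (ψ : ℕ → R⟦X⟧) {L L' W W' : ℕ} (hL : L ≤ L') (hW : W ≤ W') :
    nestedSpan ψ L W ≤ nestedSpan ψ L' W' :=
  Submodule.span_mono fun _ ⟨cs, hcs, hlen, hsum, hF⟩ => ⟨cs, hcs, hlen.trans hL, hsum.trans hW, hF⟩

theorem nestedSeries_mem_nestedSpan (ψ : ℕ → R⟦X⟧) {cs : List ℕ} (hcs : ∀ c ∈ cs, 1 ≤ c) :
    nestedSeries (cs.map ψ) ∈ nestedSpan ψ cs.length cs.sum :=
  Submodule.subset_span ⟨cs, hcs, le_rfl, le_rfl, rfl⟩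

theorem nestedSeries_map_mem_nestedSpan {φ ψ : ℕ → R⟦X⟧}
    (hφ : ∀ s, 1 ≤ s → φ s ∈ Submodule.span R (ψ '' Set.Icc 1 s)) {ss : List ℕ}
    (hss : ∀ s ∈ ss, 1 ≤ s) : nestedSeries (ss.map φ) ∈ nestedSpan ψ ss.length ss.sum := by
  -- `pre` lists the slots already rewritten in the `ψ`-basis.
  suffices h : ∀ pre : List ℕ, (∀ c ∈ pre, 1 ≤ c) →
      nestedSeries (pre.map ψ ++ ss.map φ) ∈
        nestedSpan ψ (pre.length + ss.length) (pre.sum + ss.sum) by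
    simpa using h [] (by simp)
  induction ss with
  | nil => intro pre hpre; simpa using nestedSeries_mem_nestedSpan ψ hpre
  | cons s ss ih =>
    intro pre hpre
    simp only [List.mem_cons, forall_eq_or_imp] at hss
    have hslot := Submodule.mem_map_of_mem (f := nestedSeriesSlot (pre.map ψ) (ss.map φ))
      (hφ s hss.1)
    rw [Submodule.map_span, Set.image_image] at hslot
    refine Submodule.span_le.mpr ?_ hslot
    rintro _ ⟨c, hc, rfl⟩
    have hpre' : ∀ x ∈ pre ++ [c], 1 ≤ x := by
      simp only [List.mem_append, List.mem_singleton]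
      rintro x (hx | rfl)
      exacts [hpre x hx, hc.1]
    have := ih hss.2 (pre ++ [c]) hpre'
    simp only [List.map_append, List.map_cons, List.map_nil, List.append_assoc,
      List.cons_append, List.nil_append, List.length_append, List.length_cons, List.length_nil,
      List.sum_append, List.sum_cons, List.sum_nil] at this ⊢
    exact nestedSpan_mono ψ (by omega) (by simp at hc; omega) this

end NestedSum

def evalSeries {R : Type*} [CommSemiring R] : Polynomial R →ₗ[R] R⟦X⟧ where
  toFun p := mk fun v => if v = 0 then 0 else p.eval (v : R)
  map_add' p q := by
    ext v
    simp only [coeff_mk, Polynomial.eval_add, map_add]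
    split_ifs <;> simp
  map_smul' c p := by
    ext v
    simp only [coeff_mk, Polynomial.eval_smul, map_smul]
    split_ifs <;> simp

theorem Polynomial.Sequence.mem_degreeLT_succ {R : Type*} [Semiring R] (S : Polynomial.Sequence R)
    (i : ℕ) : S i ∈ Polynomial.degreeLT R (i + 1) := by
  rw [Polynomial.mem_degreeLT, S.degree_eq]
  exact_mod_cast i.lt_succ_self

theorem evalSeries_degreeLT_le_span {K : Type*} [Field K] {S : Polynomial.Sequence K}
    {g : ℕ → K⟦X⟧} (hS : ∀ i, evalSeries (S i) ∈ Submodule.span K {g (i + 1)}) (k : ℕ) :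
    (Polynomial.degreeLT K k).map evalSeries ≤ Submodule.span K (g '' Set.Icc 1 k) := by
  rw [← S.span_degreeLT fun i _ => by simp, Submodule.map_span, Submodule.span_le]
  rintro _ ⟨_, ⟨i, hi, rfl⟩, rfl⟩
  refine Submodule.span_mono ?_ (hS i)
  simp only [Set.singleton_subset_iff]
  exact ⟨i + 1, ⟨by omega, by simpa using hi⟩, rfl⟩

def monomialSequence (R : Type*) [Semiring R] [Nontrivial R] : Polynomial.Sequence R where
  elems' i := Polynomial.X ^ i
  degree_eq' i := Polynomial.degree_X_pow i

def shiftedDescPochhammerSequence (R : Type*) [CommRing R] [IsDomain R] :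
    Polynomial.Sequence R where
  elems' i := (descPochhammer R i).comp (Polynomial.X - 1)
  degree_eq' i := by
    have hmonic : ((descPochhammer R i).comp (Polynomial.X - 1)).Monic :=
      (monic_descPochhammer R i).comp (Polynomial.monic_X_sub_C 1)
        (by rw [← Polynomial.C_1, Polynomial.natDegree_X_sub_C]; exact one_ne_zero)
    rw [Polynomial.degree_eq_natDegree hmonic.ne_zero, Polynomial.natDegree_comp,
      descPochhammer_natDegree, ← Polynomial.C_1, Polynomial.natDegree_X_sub_C, mul_one]

/-- `q / (1 - q)`. -/
def posGeomSeries : ℚ⟦X⟧ := X * PowerSeries.mk 1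

theorem coeff_posGeomSeries_pow (k v : ℕ) :
    coeff v (posGeomSeries ^ (k + 1)) = if v = 0 then 0 else ((v - 1).choose k : ℚ) := by
  rw [posGeomSeries, mul_pow, mk_one_pow_eq_mk_choose_add, pow_succ', mul_assoc]
  rcases v with _ | v
  · simp
  · rw [coeff_succ_X_mul, coeff_X_pow_mul', coeff_mk, if_neg v.succ_ne_zero, Nat.add_sub_cancel]
    split_ifs with h
    · rw [Nat.add_sub_cancel' h]
    · rw [Nat.choose_eq_zero_of_lt (by omega), Nat.cast_zero]

def bracketSlot (s : ℕ) : ℚ⟦X⟧ :=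
  mk fun v => if v = 0 then 0 else (v : ℚ) ^ (s - 1) / (s - 1).factorial

theorem evalSeries_X_pow (i : ℕ) :
    evalSeries (Polynomial.X ^ i) = (i.factorial : ℚ) • bracketSlot (i + 1) := by
  ext v
  simp only [evalSeries, bracketSlot, LinearMap.coe_mk, AddHom.coe_mk, coeff_mk, map_smul,
    Polynomial.eval_pow, Polynomial.eval_X, add_tsub_cancel_right, smul_eq_mul]
  split_ifs
  · simp
  · field_simp

theorem evalSeries_shiftedDescPochhammer (i : ℕ) :
    evalSeries ((descPochhammer ℚ i).comp (Polynomial.X - 1)) =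
      (i.factorial : ℚ) • posGeomSeries ^ (i + 1) := by
  ext v
  simp only [evalSeries, LinearMap.coe_mk, AddHom.coe_mk, coeff_mk, map_smul,
    coeff_posGeomSeries_pow, smul_eq_mul, Polynomial.eval_comp, Polynomial.eval_sub,
    Polynomial.eval_X, Polynomial.eval_one]
  split_ifs with hv
  · simp
  · rw [Nat.cast_choose_eq_descPochhammer_div, Nat.cast_pred (Nat.pos_of_ne_zero hv)]
    field_simp

theorem bracketSlot_mem_span {s : ℕ} (hs : 1 ≤ s) :
    bracketSlot s ∈ Submodule.span ℚ ((posGeomSeries ^ ·) '' Set.Icc 1 s) := by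
  refine evalSeries_degreeLT_le_span (S := shiftedDescPochhammerSequence ℚ) (fun i => ?_) s ?_
  · change evalSeries ((descPochhammer ℚ i).comp _) ∈ _
    rw [evalSeries_shiftedDescPochhammer]
    exact Submodule.smul_mem _ _ (Submodule.mem_span_singleton_self _)
  · obtain ⟨i, rfl⟩ := Nat.exists_eq_add_of_le' hs
    refine ⟨((i.factorial : ℚ)⁻¹) • Polynomial.X ^ i, ?_, ?_⟩
    · exact Submodule.smul_mem _ _ ((monomialSequence ℚ).mem_degreeLT_succ i)
    · rw [map_smul, evalSeries_X_pow, smul_smul, inv_mul_cancel₀ (by positivity), one_smul]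

theorem posGeomSeries_pow_mem_span {c : ℕ} (hc : 1 ≤ c) :
    posGeomSeries ^ c ∈ Submodule.span ℚ (bracketSlot '' Set.Icc 1 c) := by
  refine evalSeries_degreeLT_le_span (S := monomialSequence ℚ) (fun i => ?_) c ?_
  · change evalSeries (Polynomial.X ^ i) ∈ _
    rw [evalSeries_X_pow]
    exact Submodule.smul_mem _ _ (Submodule.mem_span_singleton_self _)
  · obtain ⟨i, rfl⟩ := Nat.exists_eq_add_of_le' hc
    refine ⟨((i.factorial : ℚ)⁻¹) • (descPochhammer ℚ i).comp (Polynomial.X - 1), ?_, ?_⟩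
    · exact Submodule.smul_mem _ _ ((shiftedDescPochhammerSequence ℚ).mem_degreeLT_succ i)
    · rw [map_smul, evalSeries_shiftedDescPochhammer, smul_smul, inv_mul_cancel₀ (by positivity),
        one_smul]

open Classical in
theorem coeff_bracket_eq_sum {l : ℕ} (s : Fin l → ℕ) (n : ℕ) :
    coeff n (bracket s) = ∑ u ∈ Fintype.piFinset (fun _ => range (n + 1)),
      ∑ v ∈ Fintype.piFinset (fun _ => range (n + 1)),
        if (StrictAnti u ∧ ∀ j, 0 < u j) ∧ (∀ j, 0 < v j) ∧ ∑ j, u j * v j = n then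
          ∏ j, (v j : ℚ) ^ (s j - 1) / (s j - 1).factorial else 0 := by
  rw [bracket, biBracket, coeff_mk, ← sum_fin_tuple_pair_eq_sum_piFinset]
  simp only [Pi.zero_apply, pow_zero, Nat.factorial_zero, Nat.cast_one, div_one, one_mul, and_assoc]
  rfl

theorem coeff_bracket {l : ℕ} (s : Fin l → ℕ) (n : ℕ) :
    coeff n (bracket s) = coeff n (nestedSum ((List.ofFn s).map bracketSlot) n) := by
  rw [coeff_bracket_eq_sum, List.map_ofFn, nestedSum_ofFn _ le_rfl, map_sum]
  refine sum_congr rfl fun u hu => ?_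
  simp only [Fintype.mem_piFinset, mem_range] at hu
  by_cases hu' : StrictAnti u ∧ ∀ j, 0 < u j
  · rw [if_pos ⟨hu'.1, fun j => ⟨hu'.2 j, Nat.lt_succ_iff.mp (hu j)⟩⟩,
      coeff_prod_subst_X_pow hu'.2 _ le_rfl]
    refine sum_congr rfl fun v _ => ?_
    simp only [and_iff_right hu', Function.comp_apply, bracketSlot, coeff_mk]
    by_cases hv : ∀ j, 0 < v j
    · simp only [hv, fun j => (hv j).ne', implies_true, true_and, if_false]
    · obtain ⟨j, hj⟩ := not_forall.mp hv
      rw [if_neg fun h => hv h.1, Finset.prod_eq_zero (mem_univ j) (by simp; omega), ite_self]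
  · rw [if_neg fun h => hu' ⟨h.1, fun j => (h.2 j).1⟩, map_zero]
    exact sum_eq_zero fun v _ => if_neg fun h => hu' h.1

theorem bracket_eq_nestedSeries {l : ℕ} (s : Fin l → ℕ) :
    bracket s = nestedSeries ((List.ofFn s).map bracketSlot) := by
  ext n
  rw [coeff_bracket, nestedSeries, coeff_mk]

theorem constantCoeff_posGeomSeries_pow {c : ℕ} (hc : 1 ≤ c) :
    constantCoeff (posGeomSeries ^ c) = 0 := by
  simp [posGeomSeries, zero_pow (by omega : c ≠ 0)]

theorem bracket_mem_nestedSpan {l : ℕ} {s : Fin l → ℕ} (hs : ∀ j, 1 ≤ s j) :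
    bracket s ∈ nestedSpan (posGeomSeries ^ ·) l (∑ j, s j) := by
  rw [bracket_eq_nestedSeries]
  simpa [List.sum_ofFn] using
    nestedSeries_map_mem_nestedSpan (fun _ => bracketSlot_mem_span) (ss := List.ofFn s)
      (by simpa [List.mem_ofFn] using hs)

theorem nestedSpan_posGeomSeries_mul_le (L₁ L₂ W₁ W₂ : ℕ) :
    nestedSpan (posGeomSeries ^ ·) L₁ W₁ * nestedSpan (posGeomSeries ^ ·) L₂ W₂ ≤
      nestedSpan (posGeomSeries ^ ·) (L₁ + L₂) (W₁ + W₂) := by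
  rw [nestedSpan, nestedSpan, Submodule.span_mul_span, Submodule.span_le]
  rintro _ ⟨_, ⟨as, has, hlen₁, hsum₁, rfl⟩, _, ⟨bs, hbs, hlen₂, hsum₂, rfl⟩, rfl⟩
  have hconst : ∀ cs : List ℕ, (∀ c ∈ cs, 1 ≤ c) →
      ∀ f ∈ cs.map (posGeomSeries ^ ·), constantCoeff f = 0 := by
    intro cs hcs f hf
    obtain ⟨c, hc, rfl⟩ := List.mem_map.mp hf
    exact constantCoeff_posGeomSeries_pow (hcs c hc)
  beta_reduce
  rw [SetLike.mem_coe, nestedSeries_mul (hconst as has) (hconst bs hbs),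
    List.stuffle_map (posGeomSeries ^ ·) (fun a b => pow_add _ a b), List.map_map]
  refine list_sum_mem fun F hF => ?_
  obtain ⟨w, hw, rfl⟩ := List.mem_map.mp hF
  have hw₁ := List.forall_mem_of_mem_stuffle (p := (1 ≤ ·)) (fun a b ha _ => by omega) has hbs hw
  exact nestedSpan_mono _ (by have := List.length_le_of_mem_stuffle hw; omega)
    (by rw [List.sum_of_mem_stuffle hw]; omega) (nestedSeries_mem_nestedSpan _ hw₁)

theorem nestedSpan_posGeomSeries_le_nestedSpan_bracketSlot (L W : ℕ) :
    nestedSpan (posGeomSeries ^ ·) L W ≤ nestedSpan bracketSlot L W := by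
  refine Submodule.span_le.mpr ?_
  rintro _ ⟨cs, hcs, hlen, hsum, rfl⟩
  exact nestedSpan_mono _ hlen hsum
    (nestedSeries_map_mem_nestedSpan (fun _ => posGeomSeries_pow_mem_span) hcs)

theorem nestedSpan_bracketSlot_le (L W : ℕ) :
    nestedSpan bracketSlot L W ≤ Submodule.span ℚ {f | ∃ (r : ℕ) (a : Fin r → ℕ),
      (∀ j, 1 ≤ a j) ∧ r ≤ L ∧ (∑ j, a j) ≤ W ∧ f = bracket a} := by
  refine Submodule.span_mono ?_
  rintro _ ⟨cs, hcs, hlen, hsum, rfl⟩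
  refine ⟨cs.length, cs.get, fun j => hcs _ (List.get_mem cs j), hlen, ?_, ?_⟩
  · rwa [← List.sum_ofFn, List.ofFn_get]
  · rw [bracket_eq_nestedSeries, List.ofFn_get]

end

/-- The product of two brackets lies in the ℚ-linear span of `1` and brackets of length
`≤ l₁ + l₂` and weight `≤ (s₁+⋯+s_{l₁}) + (t₁+⋯+t_{l₂})`.  In particular the space spanned by
`1` and all brackets is a ℚ-subalgebra of `ℚ⟦q⟧`. -/
theorem bracket_mul_mem_span {l1 l2 : ℕ} (s : Fin l1 → ℕ) (t : Fin l2 → ℕ)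
    (hs : ∀ j, 1 ≤ s j) (ht : ∀ j, 1 ≤ t j) :
    bracket s * bracket t ∈ Submodule.span ℚ
      (({1} ∪ {f | ∃ (r : ℕ) (a : Fin r → ℕ), (∀ j, 1 ≤ a j) ∧ r ≤ l1 + l2 ∧
        (∑ j, a j) ≤ (∑ j, s j) + (∑ j, t j) ∧ f = bracket a}) : Set (PowerSeries ℚ)) := by
  have hprod := Submodule.mul_mem_mul (bracket_mem_nestedSpan hs) (bracket_mem_nestedSpan ht)
  have hmem := nestedSpan_bracketSlot_le _ _
    (nestedSpan_posGeomSeries_le_nestedSpan_bracketSlot _ _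
      (nestedSpan_posGeomSeries_mul_le _ _ _ _ hprod))
  exact Submodule.span_mono Set.subset_union_right hmem
end

section
/- For all integers s1, s2 ≥ 1 with s1+s2 > 2, setting s = s1+s2−2, one has in ℚ⟦q⟧: (binom(s, s1−1)/s)·d[s] = [s1]·[s2] + binom(s, s1−1)·[s+1] − ∑_{a+b=s+2, a,b ≥ 1} (binom(a−1, s1−1) + binom(a−1, s2−1))·[a,b]. -/
open Finset

/-- The operator `d = q·d/dq` on `ℚ⟦q⟧`, sending `∑ aₙ qⁿ` to `∑ n·aₙ qⁿ`. -/
noncomputable def qd (f : PowerSeries ℚ) : PowerSeries ℚ :=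
  PowerSeries.mk fun n => (n : ℚ) * PowerSeries.coeff n f

/-!
Comparing coefficients of `q^n`, the product `[s₁]·[s₂]` is a sum over pairs `(u₁, v₁), (u₂, v₂)`
of positive integers with `u₁v₁ + u₂v₂ = n`. Summing the binomial weights over `a` by a
Vandermonde-type convolution, the double-bracket sum becomes the sum over `u₁ > u₂` of
`v₁^(s₁-1) (v₁+v₂)^(s₂-1) / ((s₁-1)! (s₂-1)!)` plus the same with `s₁, s₂` exchanged, and the
shear `(u₁, v₁, u₂, v₂) ↦ (u₁ - u₂, v₁, u₂, v₁ + v₂)` turns `u₁ > u₂` into `v₁ < v₂`. So it cancels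
exactly the terms of `[s₁]·[s₂]` with `v₁ ≠ v₂`. On the diagonal `v₁ = v₂ = v` the pair `(u₁, u₂)`
runs over the `u - 1` compositions of some `u` with `uv = n`, which leaves
`∑_{uv=n} (u - 1) v^s / ((s₁-1)! (s₂-1)!)`, the difference of the two depth-one terms.
-/

theorem mem_divisorsAntidiagonal_iff_pos {n : ℕ} {p : ℕ × ℕ} :
    p ∈ n.divisorsAntidiagonal ↔ 0 < p.1 ∧ 0 < p.2 ∧ p.1 * p.2 = n := by
  rw [Nat.mem_divisorsAntidiagonal, Nat.pos_iff_ne_zero, Nat.pos_iff_ne_zero]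
  constructor
  · rintro ⟨rfl, h⟩
    exact ⟨left_ne_zero_of_mul h, right_ne_zero_of_mul h, rfl⟩
  · rintro ⟨h1, h2, rfl⟩
    exact ⟨rfl, mul_ne_zero h1 h2⟩

def divisorsAntidiagonalPair (n : ℕ) : Finset ((ℕ × ℕ) × ℕ × ℕ) :=
  (antidiagonal n).biUnion fun m => m.1.divisorsAntidiagonal ×ˢ m.2.divisorsAntidiagonal

theorem mem_divisorsAntidiagonalPair {n : ℕ} {p : (ℕ × ℕ) × ℕ × ℕ} :
    p ∈ divisorsAntidiagonalPair n ↔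
      0 < p.1.1 ∧ 0 < p.1.2 ∧ 0 < p.2.1 ∧ 0 < p.2.2 ∧ p.1.1 * p.1.2 + p.2.1 * p.2.2 = n := by
  simp only [divisorsAntidiagonalPair, mem_biUnion, HasAntidiagonal.mem_antidiagonal, mem_product,
    Nat.mem_divisorsAntidiagonal, Prod.exists, existsAndEq, mul_ne_zero_iff, true_and,
    Nat.pos_iff_ne_zero]
  tauto

theorem sum_antidiagonal_mul_sum_divisorsAntidiagonal {R : Type*} [NonUnitalNonAssocSemiring R]
    (n : ℕ) (f g : ℕ × ℕ → R) :
    ∑ m ∈ antidiagonal n, (∑ x ∈ m.1.divisorsAntidiagonal, f x) *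
        ∑ y ∈ m.2.divisorsAntidiagonal, g y =
      ∑ p ∈ divisorsAntidiagonalPair n, f p.1 * g p.2 := by
  rw [divisorsAntidiagonalPair, sum_biUnion]
  · simp_rw [sum_mul_sum, sum_product]
  · intro m _ m' _ hne
    refine disjoint_left.2 fun p hp hp' => hne ?_
    simp only [mem_product, Nat.mem_divisorsAntidiagonal] at hp hp'
    exact Prod.ext (hp.1.1.symm.trans hp'.1.1) (hp.2.1.symm.trans hp'.2.1)

theorem sum_filter_lt_fst_eq_sum_filter_lt_snd {M : Type*} [AddCommMonoid M] (n : ℕ)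
    (G : ℕ → ℕ → M) :
    ∑ p ∈ (divisorsAntidiagonalPair n).filter (fun p => p.2.1 < p.1.1), G p.1.2 (p.1.2 + p.2.2) =
      ∑ p ∈ (divisorsAntidiagonalPair n).filter (fun p => p.1.2 < p.2.2), G p.1.2 p.2.2 := by
  refine sum_nbij' (fun p => ((p.1.1 - p.2.1, p.1.2), (p.2.1, p.1.2 + p.2.2)))
    (fun p => ((p.1.1 + p.2.1, p.1.2), (p.2.1, p.2.2 - p.1.2))) ?_ ?_ ?_ ?_ (fun _ _ => rfl)
  iterate 2
    intro p hp
    simp only [mem_filter, mem_divisorsAntidiagonalPair] at hp ⊢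
    obtain ⟨⟨hu₁, hv₁, hu₂, hv₂, hn⟩, hlt⟩ := hp
    refine ⟨⟨by omega, hv₁, hu₂, by omega, ?_⟩, by omega⟩
    zify [hlt.le] at hn ⊢
    linear_combination hn
  iterate 2
    intro p hp
    simp only [mem_filter] at hp
    ext <;> simp only <;> omega

theorem sum_eq_sum_filter_lt_add_swap_add_sum_filter_eq {M : Type*} [AddCommMonoid M] (n : ℕ)
    (F : (ℕ × ℕ) × ℕ × ℕ → M) :
    ∑ p ∈ divisorsAntidiagonalPair n, F p =
      ∑ p ∈ (divisorsAntidiagonalPair n).filter (fun p => p.1.2 < p.2.2), (F p + F p.swap) +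
        ∑ p ∈ (divisorsAntidiagonalPair n).filter (fun p => p.1.2 = p.2.2), F p := by
  have hswap : ∑ p ∈ (divisorsAntidiagonalPair n).filter (fun p => p.1.2 < p.2.2), F p.swap =
      ∑ p ∈ (divisorsAntidiagonalPair n).filter (fun p => p.2.2 < p.1.2), F p := by
    refine sum_nbij' Prod.swap Prod.swap ?_ ?_ (fun _ _ => rfl) (fun _ _ => rfl) (fun _ _ => rfl)
    all_goals
      intro p hp
      simp only [mem_filter, mem_divisorsAntidiagonalPair, Prod.swap] at hp ⊢
      omega
  rw [sum_add_distrib, hswap, sum_filter, sum_filter, sum_filter, ← sum_add_distrib,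
    ← sum_add_distrib]
  refine sum_congr rfl fun p _ => ?_
  rcases lt_trichotomy p.1.2 p.2.2 with h | h | h
  · simp [h, h.not_gt, h.ne]
  · simp [h]
  · simp [h, h.not_gt, h.ne']

theorem sum_filter_snd_eq_eq_sum_divisorsAntidiagonal {R : Type*} [Ring R] (n : ℕ)
    (g : ℕ → ℕ → R) :
    ∑ p ∈ (divisorsAntidiagonalPair n).filter (fun p => p.1.2 = p.2.2), g p.1.2 p.2.2 =
      ∑ q ∈ n.divisorsAntidiagonal, ((q.1 : R) - 1) * g q.2 q.2 := by
  have hcard : ∀ q ∈ n.divisorsAntidiagonal,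
      ((q.1 : R) - 1) * g q.2 q.2 = ∑ _a ∈ Ico 1 q.1, g q.2 q.2 := by
    intro q hq
    rw [sum_const, Nat.card_Ico, nsmul_eq_mul,
      Nat.cast_sub (mem_divisorsAntidiagonal_iff_pos.1 hq).1, Nat.cast_one]
  rw [sum_congr rfl hcard, sum_sigma']
  symm
  refine sum_nbij' (fun x => ((x.2, x.1.2), (x.1.1 - x.2, x.1.2)))
    (fun p => ⟨(p.1.1 + p.2.1, p.1.2), p.1.1⟩) ?_ ?_ ?_ ?_ (fun _ _ => rfl)
  · intro x hx
    simp only [mem_sigma, mem_divisorsAntidiagonal_iff_pos, mem_Ico] at hx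
    simp only [mem_filter, mem_divisorsAntidiagonalPair]
    obtain ⟨⟨-, hv, hn⟩, h1, hlt⟩ := hx
    refine ⟨⟨h1, hv, by omega, hv, ?_⟩, trivial⟩
    zify [hlt.le] at hn ⊢
    linear_combination hn
  · intro p hp
    simp only [mem_filter, mem_divisorsAntidiagonalPair] at hp
    simp only [mem_sigma, mem_divisorsAntidiagonal_iff_pos, mem_Ico]
    obtain ⟨⟨hu₁, hv₁, hu₂, hv₂, hn⟩, hv⟩ := hp
    refine ⟨⟨by omega, hv₁, ?_⟩, hu₁, by omega⟩
    rw [← hn, hv]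
    ring
  · intro x hx
    simp only [mem_sigma, mem_Ico] at hx
    refine Sigma.ext (Prod.ext ?_ rfl) HEq.rfl
    dsimp only
    omega
  · intro p hp
    simp only [mem_filter] at hp
    ext <;> simp only <;> omega

theorem sum_range_pow_div_factorial_mul {K : Type*} [Field K] [CharZero K] (e : ℕ) (x y : K) :
    ∑ m ∈ range (e + 1), x ^ m / m.factorial * (y ^ (e - m) / (e - m).factorial) =
      (x + y) ^ e / e.factorial := by
  rw [add_pow, sum_div]
  refine sum_congr rfl fun m hm => ?_
  rw [Nat.cast_choose K (Nat.lt_succ_iff.1 (mem_range.1 hm))]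
  field_simp [Nat.factorial_ne_zero]

theorem sum_Icc_choose_mul_pow_div_factorial {K : Type*} [Field K] [CharZero K] (e₁ e₂ : ℕ)
    (x y : K) :
    ∑ a ∈ Icc 1 (e₁ + e₂ + 1), ((a - 1).choose e₁ : K) *
        (x ^ (a - 1) / (a - 1).factorial *
          (y ^ (e₁ + e₂ + 1 - a) / (e₁ + e₂ + 1 - a).factorial)) =
      x ^ e₁ / e₁.factorial * ((x + y) ^ e₂ / e₂.factorial) := by
  rw [← Ico_add_one_right_eq_Icc, sum_Ico_eq_sum_range, Nat.add_sub_cancel, add_assoc,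
    sum_range_add,
    sum_eq_zero fun j hj => by rw [Nat.choose_eq_zero_of_lt (by simpa using hj)]; simp, zero_add,
    ← sum_range_pow_div_factorial_mul, mul_sum]
  refine sum_congr rfl fun m hm => ?_
  rw [show 1 + (e₁ + m) - 1 = e₁ + m by omega,
    show e₁ + (e₂ + 1) - (1 + (e₁ + m)) = e₂ - m by omega, Nat.cast_add_choose, pow_add]
  field_simp [Nat.factorial_ne_zero]

theorem coeff_bracket_one (k n : ℕ) :
    PowerSeries.coeff n (bracket ![k]) =
      ∑ p ∈ n.divisorsAntidiagonal, (p.2 : ℚ) ^ (k - 1) / (k - 1).factorial := by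
  rw [bracket, biBracket, PowerSeries.coeff_mk, ← sum_product', ← sum_filter]
  refine sum_bij (fun uv _ => ((uv.1 0 : ℕ), (uv.2 0 : ℕ))) ?_ ?_ ?_ ?_
  · intro uv huv
    obtain ⟨-, -, hu, hv, hn⟩ := mem_filter.1 huv
    rw [Fin.sum_univ_one] at hn
    exact mem_divisorsAntidiagonal_iff_pos.2 ⟨hu 0, hv 0, hn⟩
  · intro uv _ uv' _ h
    simp only [Prod.mk.injEq, Fin.val_inj] at h
    exact Prod.ext (funext fun j => Subsingleton.elim j 0 ▸ h.1)
      (funext fun j => Subsingleton.elim j 0 ▸ h.2)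
  · intro p hp
    obtain ⟨hu, hv, rfl⟩ := mem_divisorsAntidiagonal_iff_pos.1 hp
    refine ⟨(fun _ => ⟨p.1, Nat.lt_succ_of_le (Nat.le_mul_of_pos_right _ hv)⟩,
      fun _ => ⟨p.2, Nat.lt_succ_of_le (Nat.le_mul_of_pos_left _ hu)⟩), ?_, rfl⟩
    exact mem_filter.2 ⟨by simp, fun i j hij => absurd (Subsingleton.elim i j) hij.ne,
      fun _ => hu, fun _ => hv, by simp⟩
  · intro uv _
    simp

theorem coeff_bracket_two (a b n : ℕ) :
    PowerSeries.coeff n (bracket ![a, b]) =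
      ∑ p ∈ (divisorsAntidiagonalPair n).filter (fun p => p.2.1 < p.1.1),
        (p.1.2 : ℚ) ^ (a - 1) / (a - 1).factorial *
          ((p.2.2 : ℚ) ^ (b - 1) / (b - 1).factorial) := by
  rw [bracket, biBracket, PowerSeries.coeff_mk, ← sum_product', ← sum_filter]
  refine sum_bij (fun uv _ => (((uv.1 0 : ℕ), (uv.2 0 : ℕ)), ((uv.1 1 : ℕ), (uv.2 1 : ℕ))))
    ?_ ?_ ?_ ?_
  · intro uv huv
    obtain ⟨-, hlt, hu, hv, hn⟩ := mem_filter.1 huv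
    rw [Fin.sum_univ_two] at hn
    exact mem_filter.2 ⟨mem_divisorsAntidiagonalPair.2 ⟨hu 0, hv 0, hu 1, hv 1, hn⟩,
      hlt 0 1 Fin.zero_lt_one⟩
  · intro uv _ uv' _ h
    simp only [Prod.mk.injEq, Fin.val_inj] at h
    exact Prod.ext (funext (Fin.forall_fin_two.2 ⟨h.1.1, h.2.1⟩))
      (funext (Fin.forall_fin_two.2 ⟨h.1.2, h.2.2⟩))
  · intro p hp
    obtain ⟨hp, hlt⟩ := mem_filter.1 hp
    obtain ⟨hu₁, hv₁, hu₂, hv₂, hn⟩ := mem_divisorsAntidiagonalPair.1 hp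
    have hle : ∀ x y, 0 < y → x * y ≤ n → x < n + 1 := fun x y hy h =>
      Nat.lt_succ_of_le ((Nat.le_mul_of_pos_right x hy).trans h)
    refine ⟨(![⟨p.1.1, hle _ _ hv₁ (by omega)⟩, ⟨p.2.1, hle _ _ hv₂ (by omega)⟩],
      ![⟨p.1.2, hle _ _ hu₁ (by rw [mul_comm]; omega)⟩,
        ⟨p.2.2, hle _ _ hu₂ (by rw [mul_comm]; omega)⟩]),
      mem_filter.2 ⟨by simp, ?_, ?_, ?_, ?_⟩, rfl⟩
    · simp [Fin.forall_fin_two, hlt]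
    · exact Fin.forall_fin_two.2 ⟨hu₁, hu₂⟩
    · exact Fin.forall_fin_two.2 ⟨hv₁, hv₂⟩
    · simp [Fin.sum_univ_two, hn]
  · intro uv _
    simp [Fin.prod_univ_two, div_mul_div_comm]

theorem coeff_bracket_one_mul_bracket_one (k l n : ℕ) :
    PowerSeries.coeff n (bracket ![k] * bracket ![l]) =
      ∑ p ∈ divisorsAntidiagonalPair n,
        (p.1.2 : ℚ) ^ (k - 1) / (k - 1).factorial *
          ((p.2.2 : ℚ) ^ (l - 1) / (l - 1).factorial) := by
  simp_rw [PowerSeries.coeff_mul, coeff_bracket_one]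
  exact sum_antidiagonal_mul_sum_divisorsAntidiagonal n _ _

theorem coeff_qd_bracket_one {k : ℕ} (hk : 1 ≤ k) (n : ℕ) :
    PowerSeries.coeff n (qd (bracket ![k])) =
      ∑ p ∈ n.divisorsAntidiagonal, (p.1 : ℚ) * ((p.2 : ℚ) ^ k / (k - 1).factorial) := by
  rw [qd, PowerSeries.coeff_mk, coeff_bracket_one, mul_sum]
  refine sum_congr rfl fun p hp => ?_
  obtain ⟨-, -, rfl⟩ := mem_divisorsAntidiagonal_iff_pos.1 hp
  rw [← Nat.sub_add_cancel hk, pow_succ, Nat.add_sub_cancel]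
  push_cast
  ring

theorem coeff_sum_choose_smul_bracket_two (e₁ e₂ n : ℕ) :
    PowerSeries.coeff n (∑ a ∈ Icc 1 (e₁ + e₂ + 1),
        (((a - 1).choose e₁ : ℚ) + (a - 1).choose e₂) • bracket ![a, e₁ + e₂ + 2 - a]) =
      ∑ p ∈ (divisorsAntidiagonalPair n).filter (fun p => p.1.2 < p.2.2),
        ((p.1.2 : ℚ) ^ e₁ / e₁.factorial * ((p.2.2 : ℚ) ^ e₂ / e₂.factorial) +
          (p.2.2 : ℚ) ^ e₁ / e₁.factorial * ((p.1.2 : ℚ) ^ e₂ / e₂.factorial)) := by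
  have hvandermonde : ∀ x y : ℚ, ∑ a ∈ Icc 1 (e₁ + e₂ + 1),
      (((a - 1).choose e₁ : ℚ) + (a - 1).choose e₂) *
        (x ^ (a - 1) / (a - 1).factorial *
          (y ^ (e₁ + e₂ + 2 - a - 1) / (e₁ + e₂ + 2 - a - 1).factorial)) =
      x ^ e₁ / e₁.factorial * ((x + y) ^ e₂ / e₂.factorial) +
        x ^ e₂ / e₂.factorial * ((x + y) ^ e₁ / e₁.factorial) := by
    intro x y
    have h₂ := sum_Icc_choose_mul_pow_div_factorial e₂ e₁ x y
    rw [add_comm e₂ e₁] at h₂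
    rw [← sum_Icc_choose_mul_pow_div_factorial, ← h₂, ← sum_add_distrib]
    refine sum_congr rfl fun a _ => ?_
    rw [show e₁ + e₂ + 2 - a - 1 = e₁ + e₂ + 1 - a by omega]
    ring
  simp_rw [map_sum, PowerSeries.coeff_smul, coeff_bracket_two, smul_eq_mul, mul_sum]
  rw [sum_comm]
  refine (sum_congr rfl fun p _ => ?_).trans (sum_filter_lt_fst_eq_sum_filter_lt_snd n
    fun x y => (x : ℚ) ^ e₁ / e₁.factorial * ((y : ℚ) ^ e₂ / e₂.factorial) +
      (y : ℚ) ^ e₁ / e₁.factorial * ((x : ℚ) ^ e₂ / e₂.factorial))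
  rw [hvandermonde]
  push_cast
  ring

/-- For `s₁, s₂ ≥ 1` with `s₁+s₂ > 2` and `s = s₁+s₂−2`:
`binom(s,s₁−1)/s · d[s] = [s₁]·[s₂] + binom(s,s₁−1)·[s+1]
  − ∑_{a+b=s+2, a,b≥1} (binom(a−1,s₁−1)+binom(a−1,s₂−1))·[a,b]`,
where the sum runs over `a ∈ {1,…,s+1}` and `b = s+2−a`. -/
theorem qd_bracket_formula (s1 s2 : ℕ) (h1 : 1 ≤ s1) (h2 : 1 ≤ s2) (h : 2 < s1 + s2) :
    (((s1 + s2 - 2).choose (s1 - 1) : ℚ) / ((s1 + s2 - 2 : ℕ) : ℚ)) •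
        qd (bracket ![s1 + s2 - 2]) =
      bracket ![s1] * bracket ![s2]
      + (((s1 + s2 - 2).choose (s1 - 1) : ℚ)) • bracket ![s1 + s2 - 1]
      - ∑ a ∈ Finset.Icc 1 (s1 + s2 - 1),
          ((((a - 1).choose (s1 - 1) : ℚ)) + (((a - 1).choose (s2 - 1) : ℚ))) •
            bracket ![a, s1 + s2 - a] := by
  obtain ⟨e₁, rfl⟩ : ∃ e, s1 = e + 1 := ⟨s1 - 1, by omega⟩
  obtain ⟨e₂, rfl⟩ : ∃ e, s2 = e + 1 := ⟨s2 - 1, by omega⟩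
  obtain ⟨k, hk⟩ : ∃ k, e₁ + e₂ = k + 1 := ⟨e₁ + e₂ - 1, by omega⟩
  rw [show e₁ + 1 + (e₂ + 1) = e₁ + e₂ + 2 by ring, Nat.add_sub_cancel, Nat.add_sub_cancel,
    Nat.add_sub_cancel, show e₁ + e₂ + 2 - 1 = e₁ + e₂ + 1 by omega]
  ext n
  rw [PowerSeries.coeff_smul, coeff_qd_bracket_one (by omega), map_sub, map_add,
    coeff_bracket_one_mul_bracket_one, PowerSeries.coeff_smul, coeff_bracket_one,
    coeff_sum_choose_smul_bracket_two, sum_eq_sum_filter_lt_add_swap_add_sum_filter_eq]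
  simp only [Nat.add_sub_cancel, Prod.fst_swap, Prod.snd_swap]
  rw [sum_filter_snd_eq_eq_sum_divisorsAntidiagonal n
      fun x y => (x : ℚ) ^ e₁ / e₁.factorial * ((y : ℚ) ^ e₂ / e₂.factorial),
    add_assoc, add_sub_cancel_left, smul_eq_mul, smul_eq_mul, mul_sum, mul_sum, ← sum_add_distrib]
  refine sum_congr rfl fun p _ => ?_
  rw [Nat.cast_add_choose, div_mul_div_comm, ← pow_add, hk, Nat.add_sub_cancel,
    Nat.factorial_succ]
  push_cast
  field_simp
  ring
end

section
/- For all integers s1,…,sl ≥ 1 and r1,…,rl ≥ 0 one has in ℚ⟦q⟧: d [s1,…,sl; r1,…,rl] = ∑_{j=1}^{l} sj·(rj+1)·[s1,…,s_{j−1}, sj+1, s_{j+1},…,sl; r1,…,r_{j−1}, rj+1, r_{j+1},…,rl]. -/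
open Finset

/-!
The coefficient of `qⁿ` in a bi-bracket is a sum over pairs `(u, v)` with `∑ uⱼ vⱼ = n`, so `d`
multiplies each summand by `∑ⱼ uⱼ vⱼ`. Multiplying the `j`-th factor
`uⱼ^rⱼ / rⱼ! · vⱼ^(sⱼ-1) / (sⱼ-1)!` by `uⱼ vⱼ` gives `sⱼ (rⱼ + 1)` times the same factor with
both exponents raised by one, which is the `j`-th summand of the right-hand side.
-/

section Weight

variable {K : Type*} [Field K] [CharZero K]

theorem succ_mul_pow_succ_div_factorial (n : ℕ) (x : K) :
    ((n : K) + 1) * (x ^ (n + 1) / (n + 1).factorial) = x * (x ^ n / n.factorial) := by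
  have : (n.factorial : K) ≠ 0 := Nat.cast_ne_zero.mpr n.factorial_ne_zero
  push_cast [Nat.factorial_succ, pow_succ]
  field_simp

noncomputable def bracketWeight (s r : ℕ) (x y : K) : K :=
  x ^ r / r.factorial * (y ^ (s - 1) / (s - 1).factorial)

theorem mul_bracketWeight_succ {s : ℕ} (hs : 1 ≤ s) (r : ℕ) (x y : K) :
    ((s : K) * ((r : K) + 1)) * bracketWeight (s + 1) (r + 1) x y =
      x * y * bracketWeight s r x y := by
  obtain ⟨t, rfl⟩ := Nat.exists_eq_add_of_le' hs
  simp only [bracketWeight, Nat.add_sub_cancel]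
  calc ((t + 1 : ℕ) : K) * ((r : K) + 1) * (x ^ (r + 1) / (r + 1).factorial *
          (y ^ (t + 1) / (t + 1).factorial))
      = (((r : K) + 1) * (x ^ (r + 1) / (r + 1).factorial)) *
          (((t : K) + 1) * (y ^ (t + 1) / (t + 1).factorial)) := by push_cast; ring
    _ = x * y * (x ^ r / r.factorial * (y ^ t / t.factorial)) := by
      rw [succ_mul_pow_succ_div_factorial, succ_mul_pow_succ_div_factorial]; ring

theorem sum_mul_prod_bracketWeight {ι : Type*} [Fintype ι] [DecidableEq ι]
    (s r : ι → ℕ) (hs : ∀ j, 1 ≤ s j) (x y : ι → K) :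
    (∑ j, x j * y j) * ∏ k, bracketWeight (s k) (r k) (x k) (y k) =
      ∑ j, ((s j : K) * ((r j : K) + 1)) *
        ∏ k, bracketWeight (Function.update s j (s j + 1) k)
          (Function.update r j (r j + 1) k) (x k) (y k) := by
  rw [sum_mul]
  refine sum_congr rfl fun j _ => ?_
  have hrest : ∏ k ∈ univ.erase j, bracketWeight (Function.update s j (s j + 1) k)
        (Function.update r j (r j + 1) k) (x k) (y k) =
      ∏ k ∈ univ.erase j, bracketWeight (s k) (r k) (x k) (y k) :=
    prod_congr rfl fun k hk => by
      rw [Function.update_of_ne (ne_of_mem_erase hk), Function.update_of_ne (ne_of_mem_erase hk)]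
  rw [← mul_prod_erase _ _ (mem_univ j), ← mul_prod_erase _ _ (mem_univ j), hrest,
    Function.update_self, Function.update_self, ← mul_assoc (x j * y j),
    ← mul_bracketWeight_succ (hs j)]
  ring

end Weight

/-- `d [s₁,…,s_l; r₁,…,r_l] = ∑_{j=1}^{l} s_j·(r_j+1)·[…,s_j+1,…; …,r_j+1,…]`. -/
theorem qd_biBracket {l : ℕ} (s r : Fin l → ℕ) (hs : ∀ j, 1 ≤ s j) :
    qd (biBracket s r) =
      ∑ j : Fin l, ((s j : ℚ) * ((r j : ℚ) + 1)) •
        biBracket (Function.update s j (s j + 1)) (Function.update r j (r j + 1)) := by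
  ext n
  simp only [qd, biBracket, PowerSeries.coeff_mk, map_sum, PowerSeries.coeff_smul,
    smul_eq_mul, mul_sum]
  conv_rhs => rw [Finset.sum_comm]
  refine sum_congr rfl fun u _ => ?_
  conv_rhs => rw [Finset.sum_comm]
  refine sum_congr rfl fun v _ => ?_
  split_ifs with h
  · have hn : (n : ℚ) = ∑ j, (u j : ℚ) * (v j : ℚ) := by exact_mod_cast h.2.2.2.symm
    rw [hn]
    exact sum_mul_prod_bracketWeight s r hs (fun j => (u j : ℚ)) (fun j => (v j : ℚ))
  · simp
end

section
/- (Partition relation in length one) For all integers s ≥ 1 and r ≥ 0 one has in ℚ⟦q⟧: [s; r] = [r+1; s−1]. -/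
open Finset

/-- Partition relation in length one: for `s ≥ 1` and `r ≥ 0`, `[s; r] = [r+1; s−1]`. -/
theorem biBracket_partition_one (s r : ℕ) (hs : 1 ≤ s) :
    biBracket ![s] ![r] = biBracket ![r + 1] ![s - 1] := by
  unfold biBracket
  ext n
  simp only [PowerSeries.coeff_mk]
  rw [Finset.sum_comm]
  refine Finset.sum_congr rfl fun v _ => Finset.sum_congr rfl fun u _ => ?_
  simp only [Fin.prod_univ_one, Fin.sum_univ_one, Fin.forall_fin_one,
    Matrix.cons_val_zero]
  rw [show r + 1 - 1 = r from rfl]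
  by_cases h : 0 < (u 0 : ℕ) ∧ 0 < (v 0 : ℕ) ∧ (u 0 : ℕ) * (v 0 : ℕ) = n
  · rw [if_pos ⟨by simp, h.1, h.2.1, h.2.2⟩,
      if_pos ⟨by simp, h.2.1, h.1, by rw [mul_comm]; exact h.2.2⟩]
    ring
  · rw [if_neg (by tauto),
      if_neg fun hh => h ⟨hh.2.2.1, hh.2.1, by rw [mul_comm]; exact hh.2.2.2⟩]
end

section
/- (Partition relation in length two) For all integers s1, s2 ≥ 1 and r1, r2 ≥ 0 one has in ℚ⟦q⟧: [s1, s2; r1, r2] = ∑_{0≤j≤r1, 0≤k≤s2−1} (−1)^k·binom(s1−1+k, k)·binom(r2+j, j)·[r2+j+1, r1−j+1; s2−1−k, s1−1+k]. -/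
/-!
Write `dpow x n = x ^ n / n!`. The `n`-th coefficient of `[s₁, s₂; r₁, r₂]` is a sum over the
partitions of `n` into a part `u₁` repeated `v₁` times and a smaller part `u₂` repeated `v₂` times.
Conjugating the Ferrers diagram is an involution of this set, sending `(u₁, u₂; v₁, v₂)` to
`(v₁ + v₂, v₁; u₂, u₁ - u₂)`. Re-indexing by it, the theorem reduces to an identity between the
weights of a partition and its conjugate, which is the divided-power binomial formula
`dpow (x + y) n = ∑ dpow x j * dpow y (n - j)` applied once to `(v₁, v₂)` and once, with
alternating signs, to `(-u₂, u₁)`.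
-/

open Finset

open Nat

section DividedPowers

variable {K : Type*} [Field K]

def dpow (x : K) (n : ℕ) : K := x ^ n / n !

lemma dpow_add [CharZero K] (x y : K) (n : ℕ) :
    dpow (x + y) n = ∑ j ∈ range (n + 1), dpow x j * dpow y (n - j) := by
  rw [dpow, add_pow, sum_div]
  refine sum_congr rfl fun j hj => ?_
  rw [Nat.cast_choose K (Nat.lt_succ_iff.mp (mem_range.mp hj)), dpow, dpow]
  field_simp [Nat.factorial_ne_zero]

lemma dpow_neg (x : K) (n : ℕ) : dpow (-x) n = (-1) ^ n * dpow x n := by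
  rw [dpow, dpow, neg_pow, mul_div_assoc]

lemma choose_mul_dpow_add [CharZero K] (x : K) (a b : ℕ) :
    ((a + b).choose b : K) * dpow x (a + b) = dpow x a * dpow x b := by
  rw [add_comm a b, Nat.cast_add_choose, dpow, dpow, dpow, pow_add]
  field_simp [Nat.factorial_ne_zero]

lemma sum_choose_mul_dpow [CharZero K] (x y : K) (m n : ℕ) :
    ∑ j ∈ range (n + 1), ((m + j).choose j : K) * (dpow x (m + j) * dpow y (n - j)) =
      dpow x m * dpow (x + y) n := by
  simp only [← mul_assoc, choose_mul_dpow_add, dpow_add, mul_sum]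

lemma sum_neg_one_pow_mul_choose_mul_dpow [CharZero K] (x z : K) (m n : ℕ) :
    ∑ k ∈ range (n + 1), (-1) ^ k * ((m + k).choose k : K) * (dpow z (n - k) * dpow x (m + k)) =
      dpow x m * dpow (z - x) n := by
  rw [← neg_add_eq_sub, dpow_add, mul_sum]
  refine sum_congr rfl fun k _ => ?_
  rw [dpow_neg]
  linear_combination (-1) ^ k * dpow z (n - k) * choose_mul_dpow_add x m k

end DividedPowers

/-- A point `((u₁, u₂), (v₁, v₂))` stands for `u = ![u₁, u₂]`, `v = ![v₁, v₂]` in `biBracket`. -/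
def biBracketIndex (n : ℕ) : Finset ((ℕ × ℕ) × ℕ × ℕ) :=
  ((range (n + 1) ×ˢ range (n + 1)) ×ˢ (range (n + 1) ×ˢ range (n + 1))).filter fun p =>
    p.1.2 < p.1.1 ∧ (0 < p.1.1 ∧ 0 < p.1.2) ∧ (0 < p.2.1 ∧ 0 < p.2.2) ∧
      p.1.1 * p.2.1 + p.1.2 * p.2.2 = n

def biBracketWeight (a b c d : ℕ) (p : (ℕ × ℕ) × ℕ × ℕ) : ℚ :=
  dpow (p.1.1 : ℚ) c * dpow (p.2.1 : ℚ) (a - 1) * (dpow (p.1.2 : ℚ) d * dpow (p.2.2 : ℚ) (b - 1))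

lemma coeff_biBracket_two (a b c d n : ℕ) :
    PowerSeries.coeff n (biBracket ![a, b] ![c, d]) =
      ∑ p ∈ biBracketIndex n, biBracketWeight a b c d p := by
  simp only [biBracket, PowerSeries.coeff_mk, biBracketIndex, sum_filter, sum_product,
    biBracketWeight, dpow]
  simp only [← (piFinTwoEquiv fun _ => Fin (n + 1)).symm.sum_comp, Fintype.sum_prod_type]
  simp [Fin.forall_fin_two, Fin.sum_univ_two, Fin.prod_univ_two, sum_range]

lemma mem_biBracketIndex {n : ℕ} {p : (ℕ × ℕ) × ℕ × ℕ} :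
    p ∈ biBracketIndex n ↔ p.1.2 < p.1.1 ∧ 0 < p.1.2 ∧ 0 < p.2.1 ∧ 0 < p.2.2 ∧
      p.1.1 * p.2.1 + p.1.2 * p.2.2 = n := by
  obtain ⟨⟨u₁, u₂⟩, v₁, v₂⟩ := p
  simp only [biBracketIndex, mem_filter, mem_product, mem_range]
  constructor
  · rintro ⟨-, hu, ⟨-, hu₂⟩, hv, hn⟩
    exact ⟨hu, hu₂, hv.1, hv.2, hn⟩
  · rintro ⟨hu, hu₂, hv₁, hv₂, hn⟩
    have := Nat.le_mul_of_pos_right u₁ hv₁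
    have := Nat.le_mul_of_pos_left v₁ (hu₂.trans hu)
    have := Nat.le_mul_of_pos_right u₂ hv₂
    have := Nat.le_mul_of_pos_left v₂ hu₂
    refine ⟨⟨⟨?_, ?_⟩, ?_, ?_⟩, hu, ⟨?_, hu₂⟩, ⟨hv₁, hv₂⟩, hn⟩ <;> omega

def biBracketConj (p : (ℕ × ℕ) × ℕ × ℕ) : (ℕ × ℕ) × ℕ × ℕ :=
  ((p.2.1 + p.2.2, p.2.1), (p.1.2, p.1.1 - p.1.2))

lemma biBracketConj_mem {n : ℕ} {p : (ℕ × ℕ) × ℕ × ℕ} (hp : p ∈ biBracketIndex n) :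
    biBracketConj p ∈ biBracketIndex n := by
  obtain ⟨⟨u₁, u₂⟩, v₁, v₂⟩ := p
  have hp' := mem_biBracketIndex.mp hp
  dsimp only at hp'
  obtain ⟨hu, hu₂, hv₁, hv₂, hn⟩ := hp'
  obtain ⟨t, rfl⟩ := Nat.exists_eq_add_of_lt hu
  refine mem_biBracketIndex.mpr
    ⟨by simp [biBracketConj]; omega, hv₁, hu₂, by simp [biBracketConj], ?_⟩
  simp only [biBracketConj] at hn ⊢
  rw [← hn]
  simp only [add_assoc, Nat.add_sub_cancel_left]
  ring

lemma biBracketConj_biBracketConj {n : ℕ} {p : (ℕ × ℕ) × ℕ × ℕ} (hp : p ∈ biBracketIndex n) :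
    biBracketConj (biBracketConj p) = p := by
  obtain ⟨⟨u₁, u₂⟩, v₁, v₂⟩ := p
  have hu : u₂ < u₁ := (mem_biBracketIndex.mp hp).1
  simp [biBracketConj, Nat.add_sub_cancel' hu.le]

lemma sum_biBracketIndex_comp_conj {M : Type*} [AddCommMonoid M] (n : ℕ)
    (f : (ℕ × ℕ) × ℕ × ℕ → M) :
    ∑ p ∈ biBracketIndex n, f (biBracketConj p) = ∑ p ∈ biBracketIndex n, f p :=
  sum_nbij' biBracketConj biBracketConj (fun _ => biBracketConj_mem) (fun _ => biBracketConj_mem)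
    (fun _ => biBracketConj_biBracketConj) (fun _ => biBracketConj_biBracketConj) fun _ _ => rfl

lemma biBracketWeight_conj_eq_sum {s₁ s₂ : ℕ} (h₂ : 1 ≤ s₂) (r₁ r₂ : ℕ) {p : (ℕ × ℕ) × ℕ × ℕ}
    (hp : p.1.2 ≤ p.1.1) :
    biBracketWeight s₁ s₂ r₁ r₂ (biBracketConj p) =
      ∑ j ∈ range (r₁ + 1), ∑ k ∈ range s₂,
        (-1 : ℚ) ^ k * ((s₁ - 1 + k).choose k) * ((r₂ + j).choose j) *
          biBracketWeight (r₂ + j + 1) (r₁ - j + 1) (s₂ - 1 - k) (s₁ - 1 + k) p := by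
  obtain ⟨⟨u₁, u₂⟩, v₁, v₂⟩ := p
  obtain ⟨m₂, rfl⟩ := Nat.exists_eq_add_of_le' h₂
  simp only [biBracketWeight, biBracketConj, Nat.cast_sub hp, Nat.cast_add, add_tsub_cancel_right]
  calc _ = dpow (v₁ : ℚ) r₂ * dpow (v₁ + v₂ : ℚ) r₁ *
          (dpow (u₂ : ℚ) (s₁ - 1) * dpow (u₁ - u₂ : ℚ) m₂) := by
        ring
    _ = (∑ j ∈ range (r₁ + 1), ((r₂ + j).choose j : ℚ) *
            (dpow (v₁ : ℚ) (r₂ + j) * dpow (v₂ : ℚ) (r₁ - j))) *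
          ∑ k ∈ range (m₂ + 1), (-1) ^ k * ((s₁ - 1 + k).choose k : ℚ) *
            (dpow (u₁ : ℚ) (m₂ - k) * dpow (u₂ : ℚ) (s₁ - 1 + k)) := by
        rw [sum_choose_mul_dpow, sum_neg_one_pow_mul_choose_mul_dpow]
    _ = _ := by
        rw [sum_mul_sum]
        exact sum_congr rfl fun j _ => sum_congr rfl fun k _ => by ring

theorem biBracket_partition_two_general (s1 s2 : ℕ) (h2 : 1 ≤ s2) (r1 r2 : ℕ) :
    biBracket ![s1, s2] ![r1, r2] =
      ∑ j ∈ Finset.range (r1 + 1), ∑ k ∈ Finset.range s2,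
        ((-1 : ℚ) ^ k * ((s1 - 1 + k).choose k) * ((r2 + j).choose j)) •
          biBracket ![r2 + j + 1, r1 - j + 1] ![s2 - 1 - k, s1 - 1 + k] := by
  ext n
  rw [coeff_biBracket_two, ← sum_biBracketIndex_comp_conj]
  calc _ = ∑ p ∈ biBracketIndex n, ∑ j ∈ range (r1 + 1), ∑ k ∈ range s2,
        (-1 : ℚ) ^ k * ((s1 - 1 + k).choose k) * ((r2 + j).choose j) *
          biBracketWeight (r2 + j + 1) (r1 - j + 1) (s2 - 1 - k) (s1 - 1 + k) p :=
        sum_congr rfl fun p hp =>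
          biBracketWeight_conj_eq_sum h2 r1 r2 (mem_biBracketIndex.mp hp).1.le
    _ = _ := by
        simp only [map_sum, map_smul, smul_eq_mul, coeff_biBracket_two, mul_sum]
        rw [sum_comm]
        exact sum_congr rfl fun j _ => sum_comm

/-- Partition relation in length two: for `s₁, s₂ ≥ 1` and `r₁, r₂ ≥ 0`,
`[s₁,s₂; r₁,r₂] = ∑_{0≤j≤r₁, 0≤k≤s₂−1} (−1)^k·binom(s₁−1+k,k)·binom(r₂+j,j)·
  [r₂+j+1, r₁−j+1; s₂−1−k, s₁−1+k]`. -/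
theorem biBracket_partition_two (s1 s2 : ℕ) (h1 : 1 ≤ s1) (h2 : 1 ≤ s2) (r1 r2 : ℕ) :
    biBracket ![s1, s2] ![r1, r2] =
      ∑ j ∈ Finset.range (r1 + 1), ∑ k ∈ Finset.range s2,
        ((-1 : ℚ) ^ k * ((s1 - 1 + k).choose k) * ((r2 + j).choose j)) •
          biBracket ![r2 + j + 1, r1 - j + 1] ![s2 - 1 - k, s1 - 1 + k] :=
  biBracket_partition_two_general s1 s2 h2 r1 r2
end

section
/- (Reduction of the multitangent function Ψ_{3,2} into monotangent functions) For every τ in the complex upper half-plane, ∑_{n1>n2, n1,n2∈ℤ} 1/((τ+n1)^3·(τ+n2)^2) = 3·ζ(3)·∑_{n∈ℤ} 1/(τ+n)^2 + ζ(2)·∑_{n∈ℤ} 1/(τ+n)^3, all three series being absolutely convergent. -/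
/-! With `n₁ = n₂ + k`, `k ≥ 1`, the partial fraction decomposition (for `u = v + k`)
`1/(u³v²) = 1/(k²u³) + 2/(k³u²) + 1/(k³v²) + 3/k⁴ · (1/u - 1/v)`
turns each fibre `∑_{n₂}` into `Ψ₃(τ)/k² + 3Ψ₂(τ)/k³`, because `∑_n (1/(τ+n+k) - 1/(τ+n))`
telescopes to `0`. Summing over `k` produces `ζ(2)` and `ζ(3)`; the double series is dominated by
the product of the absolutely convergent series `∑ |τ+n|⁻³` and `∑ |τ+n|⁻²`, which justifies
summing fibrewise. -/

open Filter Topology Complex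

section Telescoping

variable {E : Type*} [AddCommGroup E] [TopologicalSpace E] [IsTopologicalAddGroup E] [T2Space E]
  {g : ℤ → E}

theorem hasSum_sub_add_one_of_tendsto_cofinite (hg : Tendsto g cofinite (𝓝 0))
    (hs : Summable fun n ↦ g (n + 1) - g n) : HasSum (fun n ↦ g (n + 1) - g n) 0 := by
  have hnat : Tendsto ((↑) : ℕ → ℤ) atTop cofinite :=
    Nat.cofinite_eq_atTop ▸ Nat.cast_injective.tendsto_cofinite
  have hneg : Tendsto (fun N : ℕ ↦ -(N : ℤ)) atTop cofinite :=
    Nat.cofinite_eq_atTop ▸ (neg_injective.comp Nat.cast_injective).tendsto_cofinite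
  have hpartial : Tendsto (fun N : ℕ ↦ ∑ n ∈ Finset.Ico (-(N : ℤ)) N, (g (n + 1) - g n)) atTop
      (𝓝 0) := by
    have htel (N : ℕ) : ∑ n ∈ Finset.Ico (-(N : ℤ)) N, (g (n + 1) - g n) = g N - g (-N) := by
      simpa [neg_add_eq_sub] using Finset.sum_Ico_int_sub N (-g)
    simpa [htel] using (hg.comp hnat).sub (hg.comp hneg)
  have hsym := SummationFilter.hasSum_symmetricIco_int_iff.mp
    (hs.hasSum.mono_left (SummationFilter.symmetricIco ℤ).le_atTop)
  exact tendsto_nhds_unique hsym hpartial ▸ hs.hasSum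

theorem hasSum_sub_add_natCast_of_tendsto_cofinite (hg : Tendsto g cofinite (𝓝 0))
    (hs : Summable fun n ↦ g (n + 1) - g n) (k : ℕ) : HasSum (fun n ↦ g (n + k) - g n) 0 := by
  induction k with
  | zero => simp
  | succ k ih =>
    have hshift : HasSum (fun n ↦ g (n + 1 + k) - g (n + 1)) 0 :=
      (Equiv.addRight (1 : ℤ)).hasSum_iff (f := fun n ↦ g (n + k) - g n) |>.mpr ih
    convert hshift.add (hasSum_sub_add_one_of_tendsto_cofinite hg hs) using 1
    · ext n
      rw [sub_add_sub_cancel, Nat.cast_succ, add_right_comm, add_assoc]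
    · rw [add_zero]

end Telescoping

noncomputable def monotangent (k : ℕ) (τ : ℂ) : ℂ := ∑' n : ℤ, 1 / (τ + n) ^ k

-- No condition on `τ`: at most one term is the junk value `1 / 0 = 0`.
theorem summable_one_div_add_intCast_pow (τ : ℂ) {k : ℕ} (hk : 2 ≤ k) :
    Summable fun n : ℤ ↦ 1 / (τ + n) ^ k := by
  simpa using EisensteinSeries.linear_right_summable τ 1 (k := k) (by exact_mod_cast hk)

theorem hasSum_monotangent (τ : ℂ) {k : ℕ} (hk : 2 ≤ k) :
    HasSum (fun n : ℤ ↦ 1 / (τ + n) ^ k) (monotangent k τ) :=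
  (summable_one_div_add_intCast_pow τ hk).hasSum

theorem hasSum_monotangent_add_intCast (τ : ℂ) {k : ℕ} (hk : 2 ≤ k) (j : ℤ) :
    HasSum (fun n : ℤ ↦ 1 / (τ + n + j) ^ k) (monotangent k τ) := by
  have := (Equiv.addRight j).hasSum_iff.mpr (hasSum_monotangent τ hk)
  simpa only [Function.comp_def, Equiv.coe_addRight, Int.cast_add, add_assoc, monotangent]
    using this

theorem tendsto_one_div_add_intCast_cofinite (τ : ℂ) :
    Tendsto (fun n : ℤ ↦ 1 / (τ + n)) cofinite (𝓝 0) := by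
  have hcast : Tendsto (fun n : ℤ ↦ (n : ℝ)⁻¹) cofinite (𝓝 0) :=
    tendsto_inv₀_cobounded.comp
      (Metric.cobounded_eq_cocompact (α := ℝ) ▸ Int.tendsto_coe_cofinite)
  simpa using (EisensteinSeries.linear_inv_isBigO_right 1 τ).trans_tendsto hcast

theorem hasSum_one_div_add_intCast_add_natCast_sub {τ : ℂ} (hτ : τ ∈ integerComplement)
    (k : ℕ) :
    HasSum (fun n : ℤ ↦ 1 / (τ + n + k) - 1 / (τ + n)) 0 := by
  have hs : Summable fun n : ℤ ↦ 1 / (τ + ↑(n + 1)) - 1 / (τ + n) := by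
    refine ((EisensteinSeries.summable_linear_right_add_one_mul_linear_right τ 1 1).neg).congr
      fun n ↦ ?_
    have h₀ := integerComplement_add_ne_zero hτ n
    have h₁ := integerComplement_add_ne_zero hτ (n + 1)
    rw [Int.cast_add, Int.cast_one, ← add_assoc] at h₁ ⊢
    simp only [one_mul]
    field_simp
    ring
  simpa [add_assoc] using hasSum_sub_add_natCast_of_tendsto_cofinite
    (tendsto_one_div_add_intCast_cofinite τ) hs k

theorem one_div_pow_three_mul_pow_two_of_eq_add {F : Type*} [Field F] {u v K : F}
    (hu : u ≠ 0) (hv : v ≠ 0) (hK : K ≠ 0) (huv : u = v + K) :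
    1 / (u ^ 3 * v ^ 2) = 1 / K ^ 2 * (1 / u ^ 3) + 2 / K ^ 3 * (1 / u ^ 2)
      + 1 / K ^ 3 * (1 / v ^ 2) + 3 / K ^ 4 * (1 / u - 1 / v) := by
  subst huv
  field_simp
  ring

theorem hasSum_one_div_add_natCast_pow_three_mul_pow_two {τ : ℂ} (hτ : τ ∈ integerComplement)
    {k : ℕ} (hk : k ≠ 0) :
    HasSum (fun n : ℤ ↦ 1 / ((τ + n + k) ^ 3 * (τ + n) ^ 2))
      (1 / (k : ℂ) ^ 2 * monotangent 3 τ + 3 / (k : ℂ) ^ 3 * monotangent 2 τ) := by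
  have hcube :=
    (hasSum_monotangent_add_intCast τ (k := 3) (by norm_num) k).mul_left (1 / (k : ℂ) ^ 2)
  have hsq := (hasSum_monotangent_add_intCast τ le_rfl k).mul_left (2 / (k : ℂ) ^ 3)
  have hsq' := (hasSum_monotangent τ le_rfl).mul_left (1 / (k : ℂ) ^ 3)
  have htel := (hasSum_one_div_add_intCast_add_natCast_sub hτ k).mul_left (3 / (k : ℂ) ^ 4)
  simp only [Int.cast_natCast] at hcube hsq
  rw [show 1 / (k : ℂ) ^ 2 * monotangent 3 τ + 3 / (k : ℂ) ^ 3 * monotangent 2 τ =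
    1 / (k : ℂ) ^ 2 * monotangent 3 τ + 2 / (k : ℂ) ^ 3 * monotangent 2 τ
      + 1 / (k : ℂ) ^ 3 * monotangent 2 τ + 3 / (k : ℂ) ^ 4 * 0 by ring]
  refine (((hcube.add hsq).add hsq').add htel).congr_fun fun n ↦ ?_
  refine one_div_pow_three_mul_pow_two_of_eq_add ?_ (integerComplement_add_ne_zero hτ n)
    (Nat.cast_ne_zero.mpr hk) rfl
  simpa [add_assoc] using integerComplement_add_ne_zero hτ (n + k)

theorem hasSum_one_div_natCast_add_one_pow {k : ℕ} (hk : 2 ≤ k) :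
    HasSum (fun m : ℕ ↦ 1 / ((m : ℂ) + 1) ^ k) (∑' m : ℕ, (1 : ℝ) / ((m : ℝ) + 1) ^ k : ℝ) := by
  have hs : Summable fun m : ℕ ↦ (1 : ℝ) / ((m : ℝ) + 1) ^ k := by
    simpa using (summable_nat_add_iff 1).mpr (Real.summable_one_div_nat_pow.mpr hk)
  convert hasSum_ofReal.mpr hs.hasSum with m
  push_cast
  rfl

def natProdIntEquivLtPairs : ℕ × ℤ ≃ {p : ℤ × ℤ // p.2 < p.1} where
  toFun x := ⟨(x.2 + x.1 + 1, x.2), by omega⟩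
  invFun p := ((p.1.1 - p.1.2 - 1).toNat, p.1.2)
  left_inv x := by ext <;> simp; omega
  right_inv p := by ext <;> simp; omega

theorem summable_norm_one_div_pow_three_mul_pow_two (τ : ℂ) :
    Summable fun p : {p : ℤ × ℤ // p.2 < p.1} ↦ ‖1 / ((τ + p.1.1) ^ 3 * (τ + p.1.2) ^ 2)‖ := by
  have hcube : Summable fun n : ℤ ↦ ‖1 / (τ + n) ^ 3‖ :=
    summable_norm_iff.mpr (summable_one_div_add_intCast_pow τ (by norm_num))
  have hsq : Summable fun n : ℤ ↦ ‖1 / (τ + n) ^ 2‖ :=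
    summable_norm_iff.mpr (summable_one_div_add_intCast_pow τ le_rfl)
  refine ((hcube.mul_norm hsq).subtype {p | p.2 < p.1}).congr fun p ↦ ?_
  rw [Function.comp_apply, one_div_mul_one_div]

theorem hasSum_multitangent_three_two {τ : ℂ} (hτ : τ ∈ integerComplement) :
    HasSum (fun p : {p : ℤ × ℤ // p.2 < p.1} ↦ 1 / ((τ + p.1.1) ^ 3 * (τ + p.1.2) ^ 2))
      (3 * ((∑' m : ℕ, (1 : ℝ) / ((m : ℝ) + 1) ^ 3 : ℝ) : ℂ) * monotangent 2 τ
        + ((∑' m : ℕ, (1 : ℝ) / ((m : ℝ) + 1) ^ 2 : ℝ) : ℂ) * monotangent 3 τ) := by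
  set f := fun p : {p : ℤ × ℤ // p.2 < p.1} ↦ 1 / ((τ + p.1.1) ^ 3 * (τ + p.1.2) ^ 2)
  have hf : HasSum f (∑' p, f p) := (summable_norm_one_div_pow_three_mul_pow_two τ).of_norm.hasSum
  have hfiber (m : ℕ) : HasSum (fun n ↦ f (natProdIntEquivLtPairs (m, n)))
      (1 / ((m : ℂ) + 1) ^ 2 * monotangent 3 τ + 3 / ((m : ℂ) + 1) ^ 3 * monotangent 2 τ) := by
    simpa [f, natProdIntEquivLtPairs, add_assoc] using
      hasSum_one_div_add_natCast_pow_three_mul_pow_two hτ m.succ_ne_zero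
  have hiterated := (natProdIntEquivLtPairs.hasSum_iff.mpr hf).prod_fiberwise hfiber
  have hzeta :=
    ((hasSum_one_div_natCast_add_one_pow (k := 2) le_rfl).mul_right (monotangent 3 τ)).add
      ((hasSum_one_div_natCast_add_one_pow (k := 3) (by norm_num)).mul_right (3 * monotangent 2 τ))
  rw [hiterated.unique (hzeta.congr_fun fun m ↦ by ring)] at hf
  convert hf using 1
  ring

/-- Reduction of the multitangent function `Ψ_{3,2}` into monotangent functions: for `τ` in the
upper half-plane,
`∑_{n₁>n₂} 1/((τ+n₁)³(τ+n₂)²) = 3·ζ(3)·∑_{n∈ℤ} 1/(τ+n)² + ζ(2)·∑_{n∈ℤ} 1/(τ+n)³`,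
all three series being absolutely convergent. -/
theorem multitangent_three_two_reduction (τ : ℂ) (hτ : 0 < τ.im) :
    Summable (fun p : {p : ℤ × ℤ // p.2 < p.1} =>
      ‖1 / ((τ + (p.1.1 : ℂ)) ^ 3 * (τ + (p.1.2 : ℂ)) ^ 2)‖) ∧
    Summable (fun n : ℤ => ‖1 / (τ + (n : ℂ)) ^ 2‖) ∧
    Summable (fun n : ℤ => ‖1 / (τ + (n : ℂ)) ^ 3‖) ∧
    (∑' p : {p : ℤ × ℤ // p.2 < p.1}, 1 / ((τ + (p.1.1 : ℂ)) ^ 3 * (τ + (p.1.2 : ℂ)) ^ 2)) =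
      3 * ((∑' n : ℕ, (1 : ℝ) / ((n : ℝ) + 1) ^ 3 : ℝ) : ℂ) * (∑' n : ℤ, 1 / (τ + (n : ℂ)) ^ 2)
      + ((∑' n : ℕ, (1 : ℝ) / ((n : ℝ) + 1) ^ 2 : ℝ) : ℂ) * (∑' n : ℤ, 1 / (τ + (n : ℂ)) ^ 3) :=
  ⟨summable_norm_one_div_pow_three_mul_pow_two τ,
    summable_norm_iff.mpr (summable_one_div_add_intCast_pow τ le_rfl),
    summable_norm_iff.mpr (summable_one_div_add_intCast_pow τ (by norm_num)),
    (hasSum_multitangent_three_two (UpperHalfPlane.coe_mem_integerComplement ⟨τ, hτ⟩)).tsum_eq⟩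
end
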